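/- arXiv:1907.09165 — 14 statements merged into one kernel-verified Lean document; each statement's English description precedes it below -/
import Mathlib

section
/- Let K₁ = ⟨U₁, L₁, I₁⟩ and K₂ = ⟨U₂, L₂, I₂⟩ be partial linear spaces with U₁ ∩ U₂ = ∅ and L₁ ∩ L₂ = ∅, and let ∞: L₁ → U₂ satisfy condition (∗): whenever a point x ∈ U₁ is incident (under I₁) with lines A, B ∈ L₁ and ∞(A) = ∞(B), then A = B. Then the structure K₁ ⋊_∞ K₂ with point set U₁ ∪ U₂, line set L₁ ∪ L₂, and incidence I₁ ∪ I₂ ∪ {(∞(A), A) : A ∈ L₁} is a partial linear space. -/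
/-- An incidence structure: a set of points, a set of lines (inside ambient types
`P` and `L`), and an incidence relation. -/
structure IncStr (P : Type*) (L : Type*) where
  pts : Set P
  lns : Set L
  inc : P → L → Prop

namespace IncStr

variable {P L P' L' : Type*}

/-- Incidence only relates points of the structure with lines of the structure. -/
def Proper (K : IncStr P L) : Prop :=
  ∀ p l, K.inc p l → p ∈ K.pts ∧ l ∈ K.lns

/-- A partial linear space: two distinct points incident with two lines force the
lines to coincide. -/
def IsPLS (K : IncStr P L) : Prop :=
  K.Proper ∧
    ∀ a b A B, a ≠ b → K.inc a A → K.inc b A → K.inc a B → K.inc b B → A = B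

/-- A subspace: whenever two distinct points of `H` are incident with a line, every
point incident with that line belongs to `H`. -/
def IsSubspace (K : IncStr P L) (H : Set P) : Prop :=
  H ⊆ K.pts ∧
    ∀ a b A, a ∈ H → b ∈ H → a ≠ b → K.inc a A → K.inc b A →
      ∀ x, K.inc x A → x ∈ H

/-- A hyperplane: a proper subspace met by every line. -/
def IsHyperplane (K : IncStr P L) (H : Set P) : Prop :=
  K.IsSubspace H ∧ H ≠ K.pts ∧ ∀ A ∈ K.lns, ∃ x ∈ H, K.inc x A

/-- `L[H]`: the lines all of whose incident points lie in `H`. -/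
def linesIn (K : IncStr P L) (H : Set P) : Set L :=
  {A ∈ K.lns | ∀ x, K.inc x A → x ∈ H}

/-- The restriction `K↾H`. -/
def restrict (K : IncStr P L) (H : Set P) : IncStr P L where
  pts := H
  lns := K.linesIn H
  inc := fun p l => K.inc p l ∧ p ∈ H ∧ l ∈ K.linesIn H

/-- The reduct `K∖H`. -/
def reduct (K : IncStr P L) (H : Set P) : IncStr P L where
  pts := K.pts \ H
  lns := K.lns \ K.linesIn H
  inc := fun p l => K.inc p l ∧ p ∈ K.pts \ H ∧ l ∈ K.lns \ K.linesIn H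

/-- The dual structure `K°`. -/
def dual (K : IncStr P L) : IncStr L P where
  pts := K.lns
  lns := K.pts
  inc := fun l p => K.inc p l

/-- The join `K₁ ⋊_∞ K₂` determined by a map `f = ∞` from (the ambient type of)
lines of `K₁` to points of `K₂`. -/
def join (K₁ K₂ : IncStr P L) (f : L → P) : IncStr P L where
  pts := K₁.pts ∪ K₂.pts
  lns := K₁.lns ∪ K₂.lns
  inc := fun p l => K₁.inc p l ∨ K₂.inc p l ∨ (l ∈ K₁.lns ∧ p = f l)

/-- Condition (∗): a point of `K₁` incident with two lines of `K₁` having the same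
image under `∞` forces the lines to coincide. -/
def StarCond (K₁ : IncStr P L) (f : L → P) : Prop :=
  ∀ x A B, K₁.inc x A → K₁.inc x B → f A = f B → A = B

/-- The rank of a point: the number of lines incident with it. -/
noncomputable def pointRank (K : IncStr P L) (p : P) : ℕ :=
  {l | K.inc p l}.ncard

/-- The size of a line: the number of points incident with it. -/
noncomputable def lineSize (K : IncStr P L) (l : L) : ℕ :=
  {p | K.inc p l}.ncard

/-- A finite `(ν_ρ, β_κ)`-configuration. -/
def IsConfig (K : IncStr P L) (ν ρ β κ : ℕ) : Prop :=
  K.pts.Finite ∧ K.lns.Finite ∧ K.IsPLS ∧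
  K.pts.ncard = ν ∧ K.lns.ncard = β ∧
  (∀ p ∈ K.pts, K.pointRank p = ρ) ∧
  (∀ l ∈ K.lns, K.lineSize l = κ)

/-- A binomial configuration of type `B(k,m)`. -/
def IsBinomial (K : IncStr P L) (k m : ℕ) : Prop :=
  K.IsConfig ((m + k - 1).choose k) k ((m + k - 1).choose m) m

/-- `(fp, fl)` is an isomorphism of incidence structures: a pair of bijections
(on points and on lines) preserving and reflecting incidence. -/
def IsIso (K : IncStr P L) (K' : IncStr P' L') (fp : P → P') (fl : L → L') : Prop :=
  Set.BijOn fp K.pts K'.pts ∧ Set.BijOn fl K.lns K'.lns ∧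
    ∀ p ∈ K.pts, ∀ l ∈ K.lns, (K.inc p l ↔ K'.inc (fp p) (fl l))

def Isomorphic (K : IncStr P L) (K' : IncStr P' L') : Prop :=
  ∃ fp fl, IsIso K K' fp fl

/-- A formally disjoint (tagged) copy of an incidence structure. -/
def tag (K : IncStr P L) (b : Bool) : IncStr (P × Bool) (L × Bool) where
  pts := (fun p => (p, b)) '' K.pts
  lns := (fun l => (l, b)) '' K.lns
  inc := fun p l => K.inc p.1 l.1 ∧ p.2 = b ∧ l.2 = b

end IncStr

/-- The combinatorial Grassmannian `G(Y,k) = ⟨℘_k(Y), ℘_{k+1}(Y), ⊂⟩`. -/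
def Gras {α : Type*} (Y : Finset α) (k : ℕ) : IncStr (Finset α) (Finset α) where
  pts := {a : Finset α | a ⊆ Y ∧ a.card = k}
  lns := {A : Finset α | A ⊆ Y ∧ A.card = k + 1}
  inc := fun a A => a ⊆ Y ∧ a.card = k ∧ A ⊆ Y ∧ A.card = k + 1 ∧ a ⊂ A

/-- The combinatorial Veronesian `V(Y,k)`: points are multisets of size `k` with
elements in `Y`, lines are multisets of size `< k` with elements in `Y`, a point `f`
is incident with a line `e` iff `f = e·x^{k-|e|}` for some `x ∈ Y`. -/
def Ver {α : Type*} (Y : Finset α) (k : ℕ) : IncStr (Multiset α) (Multiset α) where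
  pts := {f : Multiset α | (∀ x ∈ f, x ∈ Y) ∧ Multiset.card f = k}
  lns := {e : Multiset α | (∀ x ∈ e, x ∈ Y) ∧ Multiset.card e < k}
  inc := fun f e =>
    (∀ x ∈ f, x ∈ Y) ∧ Multiset.card f = k ∧
    (∀ x ∈ e, x ∈ Y) ∧ Multiset.card e < k ∧
    ∃ x ∈ Y, f = e + Multiset.replicate (k - Multiset.card e) x

/-!
In the join, a line `A` of `K₁` carries its `K₁`-points together with the single point
`∞(A)` of `K₂`, while a line of `K₂` carries only its `K₂`-points. So a line of `K₁` and a
line of `K₂` meet at most in `∞(A)`, and two lines of `K₁` with two common points share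
either two points of `K₁` or a point of `K₁` and their point at infinity; the latter is
what condition (∗) rules out.
-/

namespace IncStr

variable {P L : Type*} {K₁ K₂ : IncStr P L} {f : L → P} {p a b : P} {A B : L}

theorem Proper.join (h₁ : K₁.Proper) (h₂ : K₂.Proper) (hf : ∀ A ∈ K₁.lns, f A ∈ K₂.pts) :
    (K₁.join K₂ f).Proper := by
  rintro p l (h | h | ⟨hl, rfl⟩)
  · exact ⟨Or.inl (h₁ p l h).1, Or.inl (h₁ p l h).2⟩
  · exact ⟨Or.inr (h₂ p l h).1, Or.inr (h₂ p l h).2⟩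
  · exact ⟨Or.inr (hf l hl), Or.inl hl⟩

theorem inc_of_join_inc_of_mem_pts (h₂ : K₂.Proper) (hdp : Disjoint K₁.pts K₂.pts)
    (hf : ∀ A ∈ K₁.lns, f A ∈ K₂.pts) (h : (K₁.join K₂ f).inc p A) (hp : p ∈ K₁.pts) :
    K₁.inc p A := by
  rcases h with h | h | ⟨hA, rfl⟩
  · exact h
  · exact (Set.disjoint_left.mp hdp hp (h₂ p A h).1).elim
  · exact (Set.disjoint_left.mp hdp hp (hf A hA)).elim

theorem eq_of_join_inc_of_notMem_pts (h₁ : K₁.Proper) (h₂ : K₂.Proper)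
    (hdl : Disjoint K₁.lns K₂.lns) (h : (K₁.join K₂ f).inc p A) (hA : A ∈ K₁.lns)
    (hp : p ∉ K₁.pts) : p = f A := by
  rcases h with h | h | ⟨-, rfl⟩
  · exact (hp (h₁ p A h).1).elim
  · exact (Set.disjoint_left.mp hdl hA (h₂ p A h).2).elim
  · rfl

theorem inc_of_join_inc_of_notMem_lns (h₁ : K₁.Proper) (h : (K₁.join K₂ f).inc p A)
    (hA : A ∉ K₁.lns) : K₂.inc p A := by
  rcases h with h | h | ⟨hA', -⟩
  · exact (hA (h₁ p A h).2).elim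
  · exact h
  · exact (hA hA').elim

theorem eq_of_join_inc_of_mem_lns_of_notMem_lns (h₁ : K₁.Proper) (h₂ : K₂.Proper)
    (hdp : Disjoint K₁.pts K₂.pts) (hdl : Disjoint K₁.lns K₂.lns)
    (hpA : (K₁.join K₂ f).inc p A) (hpB : (K₁.join K₂ f).inc p B)
    (hA : A ∈ K₁.lns) (hB : B ∉ K₁.lns) : p = f A :=
  eq_of_join_inc_of_notMem_pts h₁ h₂ hdl hpA hA fun hp =>
    Set.disjoint_left.mp hdp hp (h₂ p B (inc_of_join_inc_of_notMem_lns h₁ hpB hB)).1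

theorem join_eq_of_mem_lns (h₁ : K₁.IsPLS) (h₂ : K₂.Proper) (hdp : Disjoint K₁.pts K₂.pts)
    (hdl : Disjoint K₁.lns K₂.lns) (hf : ∀ A ∈ K₁.lns, f A ∈ K₂.pts) (hstar : K₁.StarCond f)
    (hab : a ≠ b) (haA : (K₁.join K₂ f).inc a A) (hbA : (K₁.join K₂ f).inc b A)
    (haB : (K₁.join K₂ f).inc a B) (hbB : (K₁.join K₂ f).inc b B)
    (hA : A ∈ K₁.lns) (hB : B ∈ K₁.lns) : A = B := by
  have inc₁ {x C} (h : (K₁.join K₂ f).inc x C) (hx : x ∈ K₁.pts) : K₁.inc x C :=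
    inc_of_join_inc_of_mem_pts h₂ hdp hf h hx
  have at_inf {x C} (h : (K₁.join K₂ f).inc x C) (hC : C ∈ K₁.lns) (hx : x ∉ K₁.pts) :
      x = f C :=
    eq_of_join_inc_of_notMem_pts h₁.1 h₂ hdl h hC hx
  by_cases ha : a ∈ K₁.pts <;> by_cases hb : b ∈ K₁.pts
  · exact h₁.2 a b A B hab (inc₁ haA ha) (inc₁ hbA hb) (inc₁ haB ha) (inc₁ hbB hb)
  · exact hstar a A B (inc₁ haA ha) (inc₁ haB ha)
      ((at_inf hbA hA hb).symm.trans (at_inf hbB hB hb))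
  · exact hstar b A B (inc₁ hbA hb) (inc₁ hbB hb)
      ((at_inf haA hA ha).symm.trans (at_inf haB hB ha))
  · exact absurd ((at_inf haA hA ha).trans (at_inf hbA hA hb).symm) hab

end IncStr

/-- the join `K₁ ⋊_∞ K₂` of two partial linear spaces (with disjoint
point sets and disjoint line sets, `∞` mapping lines of `K₁` to points of `K₂`
and satisfying condition (∗)) is a partial linear space. -/
theorem statement1 {P L : Type*} (K₁ K₂ : IncStr P L)
    (h₁ : K₁.IsPLS) (h₂ : K₂.IsPLS)
    (hdp : Disjoint K₁.pts K₂.pts) (hdl : Disjoint K₁.lns K₂.lns)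
    (f : L → P) (hf : ∀ A ∈ K₁.lns, f A ∈ K₂.pts)
    (hstar : K₁.StarCond f) :
    (IncStr.join K₁ K₂ f).IsPLS := by
  refine ⟨h₁.1.join h₂.1 hf, fun a b A B hab haA hbA haB hbB => ?_⟩
  have meet {x C D} (hxC : (K₁.join K₂ f).inc x C) (hxD : (K₁.join K₂ f).inc x D)
      (hC : C ∈ K₁.lns) (hD : D ∉ K₁.lns) : x = f C :=
    IncStr.eq_of_join_inc_of_mem_lns_of_notMem_lns h₁.1 h₂.1 hdp hdl hxC hxD hC hD
  have inc₂ {x C} (h : (K₁.join K₂ f).inc x C) (hC : C ∉ K₁.lns) : K₂.inc x C :=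
    IncStr.inc_of_join_inc_of_notMem_lns h₁.1 h hC
  by_cases hA : A ∈ K₁.lns <;> by_cases hB : B ∈ K₁.lns
  · exact IncStr.join_eq_of_mem_lns h₁ h₂.1 hdp hdl hf hstar hab haA hbA haB hbB hA hB
  · exact absurd ((meet haA haB hA hB).trans (meet hbA hbB hA hB).symm) hab
  · exact absurd ((meet haB haA hB hA).trans (meet hbB hbA hB hA).symm) hab
  · exact h₂.2 a b A B hab (inc₂ haA hA) (inc₂ hbA hA) (inc₂ haB hB) (inc₂ hbB hB)
end

section
/- Let H be a hyperplane of a partial linear space K = ⟨U, L, I⟩ in which every point is incident with at least one line. Let L[H] denote the set of lines all of whose incident points lie in H, and suppose L[H] ≠ L and the map ∞: L∖L[H] → H, assigning to each line A ∉ L[H] the unique point of H incident with A, is bijective and L[H] ≠ ∅. Then L∖L[H] is a hyperplane of the dual structure K° = ⟨L, U, I⁻¹⟩. -/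
/-!
Since `H` is a subspace, a line outside `L[H]` meets `H` only in its point `∞`. Two lines
outside `L[H]` through a common point `p` therefore cannot meet in `H` unless they coincide
(injectivity of `∞`); so `p ∉ H` and every line through `p` lies outside `L[H]`, which is the
subspace property in `K°`. Points of `H` are covered by surjectivity of `∞`, points off `H`
by any line through them, and `L[H] ≠ ∅` makes the subspace proper.
-/

namespace IncStr

variable {P L : Type*} {K : IncStr P L} {H : Set P}

theorem IsSubspace.eq_of_inc_of_notMem_linesIn (hH : K.IsSubspace H) {A : L}
    (hA : A ∈ K.lns) (hAH : A ∉ K.linesIn H) {p q : P} (hp : p ∈ H) (hq : q ∈ H)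
    (hpA : K.inc p A) (hqA : K.inc q A) : p = q := by
  by_contra hpq
  exact hAH ⟨hA, hH.2 p q A hp hq hpq hpA hqA⟩

theorem Proper.mem_diff_linesIn_of_inc (hK : K.Proper) {p : P} {A : L} (hpH : p ∉ H)
    (hpA : K.inc p A) : A ∈ K.lns \ K.linesIn H :=
  ⟨(hK p A hpA).2, fun hA => hpH (hA.2 p hpA)⟩

theorem isSubspace_dual_diff_linesIn (hK : K.Proper) (hH : K.IsSubspace H) {f : L → P}
    (hf : ∀ A ∈ K.lns \ K.linesIn H, f A ∈ H ∧ K.inc (f A) A)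
    (hinj : Set.InjOn f (K.lns \ K.linesIn H)) :
    K.dual.IsSubspace (K.lns \ K.linesIn H) := by
  refine ⟨fun A hA => hA.1, fun A B p hA hB hAB hpA hpB C hpC => ?_⟩
  have hpH : p ∉ H := by
    intro hp
    have hpfA := hH.eq_of_inc_of_notMem_linesIn hA.1 hA.2 hp (hf A hA).1 hpA (hf A hA).2
    have hpfB := hH.eq_of_inc_of_notMem_linesIn hB.1 hB.2 hp (hf B hB).1 hpB (hf B hB).2
    exact hAB (hinj hA hB (hpfA.symm.trans hpfB))
  exact hK.mem_diff_linesIn_of_inc hpH hpC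

theorem exists_inc_diff_linesIn (hK : K.Proper) (hpt : ∀ p ∈ K.pts, ∃ A, K.inc p A)
    {f : L → P} (hf : ∀ A ∈ K.lns \ K.linesIn H, f A ∈ H ∧ K.inc (f A) A)
    (hsurj : Set.SurjOn f (K.lns \ K.linesIn H) H) {p : P} (hp : p ∈ K.pts) :
    ∃ A ∈ K.lns \ K.linesIn H, K.inc p A := by
  by_cases hpH : p ∈ H
  · obtain ⟨A, hA, rfl⟩ := hsurj hpH
    exact ⟨A, hA, (hf A hA).2⟩
  · obtain ⟨A, hpA⟩ := hpt p hp
    exact ⟨A, hK.mem_diff_linesIn_of_inc hpH hpA, hpA⟩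

theorem diff_linesIn_ne_lns (hne : (K.linesIn H).Nonempty) : K.lns \ K.linesIn H ≠ K.lns := by
  obtain ⟨A, hA⟩ := hne
  intro h
  exact (h.symm ▸ hA.1 : A ∈ K.lns \ K.linesIn H).2 hA

end IncStr

theorem statement3_general {P L : Type*} (K : IncStr P L) (hK : K.IsPLS)
    (hpt : ∀ p ∈ K.pts, ∃ l, K.inc p l)
    (H : Set P) (hH : K.IsHyperplane H)
    (hne' : (K.linesIn H).Nonempty)
    (f : L → P)
    (hf : ∀ A ∈ K.lns \ K.linesIn H, f A ∈ H ∧ K.inc (f A) A)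
    (hbij : Set.BijOn f (K.lns \ K.linesIn H) H) :
    K.dual.IsHyperplane (K.lns \ K.linesIn H) :=
  ⟨IncStr.isSubspace_dual_diff_linesIn hK.1 hH.1 hf hbij.injOn,
    IncStr.diff_linesIn_ne_lns hne',
    fun _ hp => IncStr.exists_inc_diff_linesIn hK.1 hpt hf hbij.surjOn hp⟩

/-- if `H` is a hyperplane of a partial linear space `K` (in which
every point is incident with some line), `L[H] ≠ L`, `L[H] ≠ ∅`, and the map `∞`
assigning to each line `A ∉ L[H]` the unique point of `H` incident with `A` is a
bijection of `L∖L[H]` onto `H`, then `L∖L[H]` is a hyperplane of the dual `K°`. -/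
theorem statement3 {P L : Type*} (K : IncStr P L) (hK : K.IsPLS)
    (hpt : ∀ p ∈ K.pts, ∃ l, K.inc p l)
    (H : Set P) (hH : K.IsHyperplane H)
    (hne : K.linesIn H ≠ K.lns) (hne' : (K.linesIn H).Nonempty)
    (f : L → P)
    (hf : ∀ A ∈ K.lns \ K.linesIn H, f A ∈ H ∧ K.inc (f A) A)
    (hbij : Set.BijOn f (K.lns \ K.linesIn H) H) :
    K.dual.IsHyperplane (K.lns \ K.linesIn H) :=
  statement3_general K hK hpt H hH hne' f hf hbij
end

section
/- Let k, m ≥ 2, let K be a finite binomial configuration of type B(k,m), and let H be a hyperplane of K such that the restriction K↾H is a configuration (i.e., all points of K↾H have the same rank) and the reduct K∖H is a binomial configuration. Then K↾H is a binomial configuration of type B(k−1,m): it has C(m+k−2,k−1) points, each incident with exactly k−1 of its lines, and C(m+k−2,m) lines, each incident with exactly m of its points. -/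
/-- if `K` is a finite binomial configuration of type `B(k,m)`
(`k, m ≥ 2`), `H` is a hyperplane of `K` such that `K↾H` is a configuration
(constant point rank) and `K∖H` is a binomial configuration, then `K↾H` is a
binomial configuration of type `B(k-1, m)`. -/
theorem statement5 {P L : Type*} (K : IncStr P L) (k m : ℕ)
    (hk : 2 ≤ k) (hm : 2 ≤ m)
    (hK : K.IsBinomial k m) (H : Set P) (hH : K.IsHyperplane H)
    (hconst : ∃ r, ∀ p ∈ H, (K.restrict H).pointRank p = r)
    (hred : ∃ k' m', (K.reduct H).IsBinomial k' m') :
    (K.restrict H).IsBinomial (k - 1) m := by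
  classical
  obtain ⟨a, rfl⟩ := Nat.exists_eq_add_of_le hm
  obtain ⟨b, rfl⟩ := Nat.exists_eq_add_of_le hk
  obtain ⟨hfinP, hfinL, hPLS, hnu, hbeta, hrank, hsize⟩ := hK
  obtain ⟨⟨hHsub, hclosed⟩, hne, hmeet⟩ := hH
  obtain ⟨r, hr⟩ := hconst
  obtain ⟨k', m', hfinP', hfinL', hPLS', hnu', hbeta', hrank', hsize'⟩ := hred
  have hHfin : H.Finite := hfinP.subset hHsub
  have hLinSub : K.linesIn H ⊆ K.lns := fun l hl => hl.1
  have hLfin : (K.linesIn H).Finite := hfinL.subset hLinSub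
  -- pick a point outside H
  have hPexists : ∃ p ∈ K.pts, p ∉ H := by
    by_contra h; push_neg at h; exact hne (Set.Subset.antisymm hHsub h)
  obtain ⟨p, hpP, hpH⟩ := hPexists
  -- the reduct's rank at p equals K's rank at p
  have hrkset : {l | (K.reduct H).inc p l} = {l | K.inc p l} := by
    ext l
    simp only [IncStr.reduct, Set.mem_setOf_eq, Set.mem_diff]
    constructor
    · rintro ⟨h1, _, _⟩; exact h1
    · intro h1
      exact ⟨h1, ⟨hpP, hpH⟩, (hPLS.1 p l h1).2, fun hmem => hpH (hmem.2 p h1)⟩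
  have hk' : k' = b + 2 := by
    have h1 := hrank' p ⟨hpP, hpH⟩
    have h2 := hrank p hpP
    unfold IncStr.pointRank at h1 h2
    rw [hrkset, h2] at h1
    omega
  -- pick a line through p
  have hlex : {l | K.inc p l}.Nonempty := by
    apply Set.nonempty_of_ncard_ne_zero
    have h2 := hrank p hpP
    unfold IncStr.pointRank at h2
    omega
  obtain ⟨l, hpl⟩ := hlex
  have hlL : l ∈ K.lns := (hPLS.1 p l hpl).2
  have hlnot : l ∉ K.linesIn H := fun hmem => hpH (hmem.2 p hpl)
  obtain ⟨x, hxH, hxl⟩ := hmeet l hlL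
  have huniq : ∀ y ∈ H, K.inc y l → y = x := by
    intro y hyH hyl
    by_contra hne'
    exact hlnot ⟨hlL, fun z hz => hclosed y x l hyH hxH hne' hyl hxl z hz⟩
  have hSfin : {q | K.inc q l}.Finite := hfinP.subset (fun q hq => (hPLS.1 q l hq).1)
  have hsetl : {q | (K.reduct H).inc q l} = {q | K.inc q l} \ {x} := by
    ext q
    simp only [IncStr.reduct, Set.mem_setOf_eq, Set.mem_diff, Set.mem_singleton_iff]
    constructor
    · rintro ⟨h1, ⟨_, hqH⟩, _⟩
      exact ⟨h1, fun he => hqH (he ▸ hxH)⟩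
    · rintro ⟨h1, hne'⟩
      exact ⟨h1, ⟨(hPLS.1 q l h1).1, fun hqH => hne' (huniq q hqH h1)⟩, hlL, hlnot⟩
  have hm' : m' = a + 1 := by
    have h1 := hsize' l ⟨hlL, hlnot⟩
    have h2 := hsize l hlL
    unfold IncStr.lineSize at h1 h2
    rw [hsetl, Set.ncard_diff_singleton_of_mem (show x ∈ {q | K.inc q l} from hxl), h2] at h1
    omega
  subst hk' hm'
  -- counts
  have e1 : a + 1 + (b + 2) - 1 = a + b + 2 := by omega
  rw [e1] at hnu' hbeta'
  have e2 : 2 + a + (2 + b) - 1 = a + b + 3 := by omega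
  rw [e2] at hnu hbeta
  have e3 : (2 : ℕ) + b = b + 2 := by omega
  rw [e3] at hnu
  have e4 : (2 : ℕ) + a = a + 2 := by omega
  rw [e4] at hbeta
  have hredpts : (K.reduct H).pts = K.pts \ H := rfl
  rw [hredpts] at hnu'
  have hredlns : (K.reduct H).lns = K.lns \ K.linesIn H := rfl
  rw [hredlns] at hbeta'
  have hdiffP := Set.ncard_diff_add_ncard_of_subset hHsub hfinP
  have hdiffL := Set.ncard_diff_add_ncard_of_subset hLinSub hfinL
  have pascal1 : (a + b + 3).choose (b + 2)
      = (a + b + 2).choose (b + 1) + (a + b + 2).choose (b + 2) :=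
    Nat.choose_succ_succ (a + b + 2) (b + 1)
  have pascal2 : (a + b + 3).choose (a + 2)
      = (a + b + 2).choose (a + 1) + (a + b + 2).choose (a + 2) :=
    Nat.choose_succ_succ (a + b + 2) (a + 1)
  have hHcard : H.ncard = (a + b + 2).choose (b + 1) := by
    rw [hnu', hnu] at hdiffP; omega
  have hLcard : (K.linesIn H).ncard = (a + b + 2).choose (a + 2) := by
    rw [hbeta', hbeta] at hdiffL; omega
  -- double counting
  have hrank_eq : ∀ q ∈ H,
      (hLfin.toFinset.filter (fun l => K.inc q l)).card = r := by
    intro q hq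
    have hset : ↑(hLfin.toFinset.filter (fun l => K.inc q l))
        = {l | (K.restrict H).inc q l} := by
      ext l
      simp only [Finset.coe_filter, Set.Finite.mem_toFinset, Set.mem_setOf_eq,
        IncStr.restrict]
      constructor
      · rintro ⟨hl, hql⟩; exact ⟨hql, hq, hl⟩
      · rintro ⟨hql, _, hl⟩; exact ⟨hl, hql⟩
    have := hr q hq
    unfold IncStr.pointRank at this
    rw [← this, ← hset, Set.ncard_coe_finset]
  have hsize_eq : ∀ l ∈ K.linesIn H,
      (hHfin.toFinset.filter (fun q => K.inc q l)).card = a + 2 := by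
    intro l hl
    have hset : ↑(hHfin.toFinset.filter (fun q => K.inc q l)) = {q | K.inc q l} := by
      ext q
      simp only [Finset.coe_filter, Set.Finite.mem_toFinset, Set.mem_setOf_eq]
      exact ⟨fun h => h.2, fun h => ⟨hl.2 q h, h⟩⟩
    have h2 := hsize l hl.1
    unfold IncStr.lineSize at h2
    rw [e4] at h2
    rw [← h2, ← hset, Set.ncard_coe_finset]
  have hcomm : ∑ q ∈ hHfin.toFinset, (hLfin.toFinset.filter (fun l => K.inc q l)).card
      = ∑ l ∈ hLfin.toFinset, (hHfin.toFinset.filter (fun q => K.inc q l)).card := by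
    simp_rw [Finset.card_filter]
    exact Finset.sum_comm
  have hL1 : ∑ q ∈ hHfin.toFinset, (hLfin.toFinset.filter (fun l => K.inc q l)).card
      = H.ncard * r := by
    rw [Finset.sum_congr rfl (fun q hq => hrank_eq q (hHfin.mem_toFinset.mp hq)),
      Finset.sum_const, smul_eq_mul, ← Set.ncard_eq_toFinset_card H hHfin]
  have hL2 : ∑ l ∈ hLfin.toFinset, (hHfin.toFinset.filter (fun q => K.inc q l)).card
      = (K.linesIn H).ncard * (a + 2) := by
    rw [Finset.sum_congr rfl (fun l hl => hsize_eq l (hLfin.mem_toFinset.mp hl)),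
      Finset.sum_const, smul_eq_mul, ← Set.ncard_eq_toFinset_card _ hLfin]
  have hsum : (a + b + 2).choose (b + 1) * r
      = (a + b + 2).choose (a + 2) * (a + 2) := by
    rw [← hHcard, ← hLcard, ← hL1, ← hL2, hcomm]
  have hident : (a + b + 2).choose (a + 2) * (a + 2)
      = (a + b + 2).choose (b + 1) * (b + 1) := by
    have h1 : (a + b + 2).choose (a + 1 + 1) * (a + 1 + 1)
        = (a + b + 2).choose (a + 1) * (a + b + 2 - (a + 1)) :=
      Nat.choose_succ_right_eq (a + b + 2) (a + 1)
    have h2 : a + b + 2 - (a + 1) = b + 1 := by omega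
    have h3 : (a + b + 2).choose (a + 1) = (a + b + 2).choose (b + 1) := by
      rw [← Nat.choose_symm (show a + 1 ≤ a + b + 2 by omega)]
      congr 1
    rw [h2, h3] at h1
    exact h1
  have hcpos : 0 < (a + b + 2).choose (b + 1) := Nat.choose_pos (by omega)
  have hrval : r = b + 1 := by
    have : (a + b + 2).choose (b + 1) * r = (a + b + 2).choose (b + 1) * (b + 1) := by
      rw [hsum, hident]
    exact Nat.eq_of_mul_eq_mul_left hcpos this
  -- assemble
  have egoal1 : 2 + b - 1 = b + 1 := by omega
  rw [egoal1]
  unfold IncStr.IsBinomial IncStr.IsConfig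
  have egoal2 : 2 + a + (b + 1) - 1 = a + b + 2 := by omega
  rw [egoal2, e4]
  refine ⟨hHfin, hLfin, ⟨?_, ?_⟩, hHcard, hLcard, ?_, ?_⟩
  · intro q A h
    exact ⟨h.2.1, h.2.2⟩
  · intro c d A B hcd h1 h2 h3 h4
    exact hPLS.2 c d A B hcd h1.1 h2.1 h3.1 h4.1
  · intro q hq
    exact (hr q hq).trans hrval
  · intro A hA
    have hset : {q | (K.restrict H).inc q A} = {q | K.inc q A} := by
      ext q
      simp only [IncStr.restrict, Set.mem_setOf_eq]
      exact ⟨fun h => h.1, fun h => ⟨h, hA.2 q h, hA⟩⟩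
    have h2 := hsize A hA.1
    unfold IncStr.lineSize at h2 ⊢
    rw [hset, h2]
    omega
end

section
/- Let k, m ≥ 2, let K be a finite binomial configuration of type B(k,m), and let H be a hyperplane of K such that the restriction K↾H is a configuration (all points of K↾H have the same rank) and the reduct K∖H is a binomial configuration. Then K∖H is a binomial configuration of type B(k,m−1): it has C(m+k−2,k) points, each incident with exactly k of its lines, and C(m+k−2,m−1) lines, each incident with exactly m−1 of its points. -/
/-- if `K` is a finite binomial configuration of type `B(k,m)`
(`k, m ≥ 2`), `H` is a hyperplane of `K` such that `K↾H` is a configuration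
(constant point rank) and `K∖H` is a binomial configuration, then `K∖H` is a
binomial configuration of type `B(k, m-1)`. -/
theorem statement6 {P L : Type*} (K : IncStr P L) (k m : ℕ)
    (hk : 2 ≤ k) (hm : 2 ≤ m)
    (hK : K.IsBinomial k m) (H : Set P) (hH : K.IsHyperplane H)
    (hconst : ∃ r, ∀ p ∈ H, (K.restrict H).pointRank p = r)
    (hred : ∃ k' m', (K.reduct H).IsBinomial k' m') :
    (K.reduct H).IsBinomial k (m - 1) := by
  obtain ⟨k', m', hredfull⟩ := hred
  obtain ⟨hPf, hLf, hPLS, hnu, hbeta, hrho, hkappa⟩ := hredfull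
  obtain ⟨hKPf, hKLf, hKPLS, hKnu, hKbeta, hKrho, hKkappa⟩ := hK
  obtain ⟨⟨hHsub, hsubsp⟩, hHne, hmeet⟩ := hH
  have hproper := hKPLS.1
  -- a point outside H
  obtain ⟨p, hp, hpH⟩ : ∃ p, p ∈ K.pts ∧ p ∉ H := by
    by_contra h
    push_neg at h
    exact hHne (Set.Subset.antisymm hHsub h)
  have hpred : p ∈ (K.reduct H).pts := ⟨hp, hpH⟩
  -- ranks in the reduct agree with ranks in K
  have hrank_eq : ∀ q ∈ (K.reduct H).pts, (K.reduct H).pointRank q = K.pointRank q := by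
    intro q hq
    unfold IncStr.pointRank
    congr 1
    ext l
    simp only [Set.mem_setOf_eq, IncStr.reduct]
    constructor
    · rintro ⟨h1, _, _⟩; exact h1
    · intro h1
      exact ⟨h1, hq, (hproper q l h1).2, fun hlin => hq.2 (hlin.2 q h1)⟩
  -- every line of the reduct has size m - 1
  have hsize_eq : ∀ A ∈ (K.reduct H).lns, (K.reduct H).lineSize A = m - 1 := by
    intro A hA
    obtain ⟨hAl, hAn⟩ := hA
    obtain ⟨x, hxH, hxA⟩ := hmeet A hAl
    have huniq : ∀ y, K.inc y A → y ∈ H → y = x := by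
      intro y hyA hyH
      by_contra hne
      exact hAn ⟨hAl, hsubsp y x A hyH hxH hne hyA hxA⟩
    have hset : {q | (K.reduct H).inc q A} = {q | K.inc q A} \ {x} := by
      ext q
      simp only [Set.mem_setOf_eq, IncStr.reduct, Set.mem_diff, Set.mem_singleton_iff]
      constructor
      · rintro ⟨h1, ⟨_, hqH⟩, _⟩
        exact ⟨h1, fun h => hqH (h ▸ hxH)⟩
      · rintro ⟨h1, hne⟩
        exact ⟨h1, ⟨(hproper q A h1).1, fun hqH => hne (huniq q h1 hqH)⟩, ⟨hAl, hAn⟩⟩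
    have hSfin : {q | K.inc q A}.Finite :=
      hKPf.subset (fun q hq => (hproper q A hq).1)
    have hstep : (K.reduct H).lineSize A = ({q | K.inc q A} \ {x}).ncard := by
      unfold IncStr.lineSize; rw [hset]
    rw [hstep, Set.ncard_diff_singleton_of_mem (s := {q | K.inc q A}) hxA]
    have hm' : K.lineSize A = m := hKkappa A hAl
    unfold IncStr.lineSize at hm'
    rw [hm']
  -- k' = k
  have hk' : k' = k := by
    have h1 := hrho p hpred
    rw [hrank_eq p hpred, hKrho p hp] at h1
    exact h1.symm
  -- a line of the reduct exists
  obtain ⟨A, hpA⟩ : {l | (K.reduct H).inc p l}.Nonempty := by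
    apply Set.nonempty_of_ncard_ne_zero
    have h1 := hrho p hpred
    unfold IncStr.pointRank at h1
    omega
  have hAlns : A ∈ (K.reduct H).lns := hpA.2.2
  -- m' = m - 1
  have hm' : m' = m - 1 := by
    have h1 := hkappa A hAlns
    rw [hsize_eq A hAlns] at h1
    exact h1.symm
  subst hk' hm'
  exact ⟨hPf, hLf, hPLS, hnu, hbeta, hrho, hkappa⟩
end

section
/- Let k, m ≥ 2, let K be a finite binomial configuration of type B(k,m), and let H be a hyperplane of K such that the restriction K↾H is a configuration (all points of K↾H have the same rank) and the reduct K∖H is a binomial configuration. Then the map ∞: L∖L[H] → H, assigning to each line A ∉ L[H] the unique point A^∞ of H incident with A, is a bijection, and K is isomorphic to (K∖H) ⋊_∞ (K↾H). -/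
/-- under the hypotheses of the decomposition theorem, the map
`∞ : L∖L[H] → H`, assigning to each line `A ∉ L[H]` the unique point of `H`
incident with `A`, is a bijection, and `K ≅ (K∖H) ⋊_∞ (K↾H)`. -/
theorem statement7 {P L : Type*} (K : IncStr P L) (k m : ℕ)
    (hk : 2 ≤ k) (hm : 2 ≤ m)
    (hK : K.IsBinomial k m) (H : Set P) (hH : K.IsHyperplane H)
    (hconst : ∃ r, ∀ p ∈ H, (K.restrict H).pointRank p = r)
    (hred : ∃ k' m', (K.reduct H).IsBinomial k' m') :
    ∃ f : L → P,
      (∀ A ∈ K.lns \ K.linesIn H, f A ∈ H ∧ K.inc (f A) A) ∧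
      Set.BijOn f (K.lns \ K.linesIn H) H ∧
      IncStr.Isomorphic K (IncStr.join (K.reduct H) (K.restrict H) f) := by
  
  classical
  obtain ⟨hPfin, hLfin, ⟨hProper, hPLS⟩, hnu, hbeta, hrho, hkappa⟩ := hK
  obtain ⟨⟨hHsub, hsubsp⟩, hHne, hHline⟩ := hH
  obtain ⟨r, hr⟩ := hconst
  obtain ⟨k', m', hPfin', hLfin', hpls', hnu', hbeta', hrho', hkappa'⟩ := hred
  -- membership in linesIn
  have hmemLI : ∀ A, A ∈ K.linesIn H ↔ A ∈ K.lns ∧ ∀ x, K.inc x A → x ∈ H := by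
    intro A; rfl
  have hLIsub : K.linesIn H ⊆ K.lns := fun A hA => ((hmemLI A).1 hA).1
  -- uniqueness of point of H on a line not in L[H]
  have huniq : ∀ A ∈ K.lns \ K.linesIn H, ∀ a ∈ H, ∀ b ∈ H,
      K.inc a A → K.inc b A → a = b := by
    intro A hA a ha b hb hia hib
    by_contra hne
    exact hA.2 ((hmemLI A).2 ⟨hA.1, fun x hx => hsubsp a b A ha hb hne hia hib x hx⟩)
  -- P nonempty
  have hPne : K.pts.Nonempty := by
    apply Set.nonempty_of_ncard_ne_zero
    rw [hnu]
    exact (Nat.choose_pos (by omega)).ne'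
  have hNE : Nonempty P := ⟨hPne.choose⟩
  -- the map ∞
  set f : L → P := fun A => if h : ∃ x ∈ H, K.inc x A then h.choose else Classical.arbitrary P
    with hfdef
  have hf1 : ∀ A ∈ K.lns \ K.linesIn H, f A ∈ H ∧ K.inc (f A) A := by
    intro A hA
    have h : ∃ x ∈ H, K.inc x A := hHline A hA.1
    simp only [hfdef, dif_pos h]
    exact ⟨h.choose_spec.1, h.choose_spec.2⟩
  have hfeq : ∀ A ∈ K.lns \ K.linesIn H, ∀ x ∈ H, K.inc x A → f A = x := by
    intro A hA x hx hinc
    exact huniq A hA _ (hf1 A hA).1 x hx (hf1 A hA).2 hinc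
  -- reduct point ranks
  have hset : ∀ p ∈ K.pts \ H, {l | (K.reduct H).inc p l} = {l | K.inc p l} := by
    intro p hp
    ext l
    simp only [IncStr.reduct, Set.mem_setOf_eq]
    constructor
    · exact fun h => h.1
    · intro h
      refine ⟨h, hp, (hProper p l h).2, fun hmem => hp.2 (((hmemLI l).1 hmem).2 p h)⟩
  obtain ⟨p0, hp0pts, hp0H⟩ : ∃ p ∈ K.pts, p ∉ H := by
    by_contra h
    push_neg at h
    exact hHne (Set.Subset.antisymm hHsub h)
  have hp0 : p0 ∈ K.pts \ H := ⟨hp0pts, hp0H⟩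
  have hkk : k' = k := by
    have h1 := hrho' p0 hp0
    have h2 := hrho p0 hp0pts
    unfold IncStr.pointRank at h1 h2
    rw [hset p0 hp0] at h1
    omega
  -- a line of the reduct
  have hA0ne : (K.reduct H).lns.Nonempty := by
    apply Set.nonempty_of_ncard_ne_zero
    rw [hbeta']
    exact (Nat.choose_pos (by omega)).ne'
  obtain ⟨A0, hA0⟩ := hA0ne
  have hA0' : A0 ∈ K.lns \ K.linesIn H := hA0
  -- line point sets
  have hlinefin : ∀ A, {p | K.inc p A}.Finite :=
    fun A => hPfin.subset (fun p hp => (hProper p A hp).1)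
  have hlset : ∀ A ∈ K.lns \ K.linesIn H,
      {p | (K.reduct H).inc p A} = {p | K.inc p A} \ {f A} := by
    intro A hA
    ext p
    simp only [IncStr.reduct, Set.mem_setOf_eq, Set.mem_diff, Set.mem_singleton_iff]
    constructor
    · rintro ⟨h, hp, -⟩
      exact ⟨h, fun he => hp.2 (he ▸ (hf1 A hA).1)⟩
    · rintro ⟨h, hne⟩
      have hpH : p ∉ H := fun hpH => hne (hfeq A hA p hpH h).symm
      exact ⟨h, ⟨(hProper p A h).1, hpH⟩, hA⟩
  have hmm : m' = m - 1 := by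
    have h1 := hkappa' A0 hA0
    have h2 := hkappa A0 hA0'.1
    unfold IncStr.lineSize at h1 h2
    have h3 := Set.ncard_diff_singleton_of_mem (s := {p | K.inc p A0})
      ((hf1 A0 hA0').2)
    rw [hlset A0 hA0', h3] at h1
    have hm2 : 2 ≤ {p | K.inc p A0}.ncard := by
      rw [h2]; exact hm
    omega
  -- cardinalities
  have hHfin : H.Finite := hPfin.subset hHsub
  have hpascal : (m + k - 1).choose k = (m + k - 2).choose (k - 1) + (m + k - 2).choose k := by
    have h := Nat.choose_succ_succ (m + k - 2) (k - 1)
    simp only [Nat.succ_eq_add_one] at h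
    rw [show m + k - 2 + 1 = m + k - 1 by omega, show k - 1 + 1 = k by omega] at h
    exact h
  have hsymm : (m + k - 2).choose (m - 1) = (m + k - 2).choose (k - 1) := by
    have h := Nat.choose_symm (show m - 1 ≤ m + k - 2 by omega)
    rw [show m + k - 2 - (m - 1) = k - 1 by omega] at h
    exact h.symm
  have hnu'2 : (K.pts \ H).ncard = (m + k - 2).choose k := by
    have := hnu'
    rw [show m' + k' - 1 = m + k - 2 by omega, hkk] at this
    exact this
  have hle : H.ncard ≤ K.pts.ncard := Set.ncard_le_ncard hHsub hPfin
  have hdiff : (K.pts \ H).ncard = K.pts.ncard - H.ncard := Set.ncard_diff hHsub hHfin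
  have hcardH : H.ncard = (m + k - 2).choose (k - 1) := by
    rw [hnu'2, hnu] at hdiff
    omega
  have hdom : (K.lns \ K.linesIn H).ncard = H.ncard := by
    have := hbeta'
    rw [show m' + k' - 1 = m + k - 2 by omega, hmm] at this
    rw [hcardH, ← hsymm]
    exact this
  -- surjectivity
  have hresset : ∀ x ∈ H, {l | (K.restrict H).inc x l} = {l | K.inc x l} ∩ K.linesIn H := by
    intro x hx
    ext l
    simp only [IncStr.restrict, Set.mem_setOf_eq, Set.mem_inter_iff]
    constructor
    · exact fun h => ⟨h.1, h.2.2⟩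
    · exact fun h => ⟨h.1, hx, h.2⟩
  have hrankfin : ∀ x, {l | K.inc x l}.Finite :=
    fun x => hLfin.subset (fun l hl => (hProper x l hl).2)
  have hsplit : ∀ x ∈ H,
      ({l | K.inc x l} ∩ K.linesIn H).ncard + ({l | K.inc x l} \ K.linesIn H).ncard = k := by
    intro x hx
    rw [Set.ncard_inter_add_ncard_diff_eq_ncard _ _ (hrankfin x)]
    have := hrho x (hHsub hx)
    exact this
  have hrval : ∀ x ∈ H, ({l | K.inc x l} ∩ K.linesIn H).ncard = r := by
    intro x hx
    have := hr x hx
    unfold IncStr.pointRank at this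
    rw [hresset x hx] at this
    exact this
  have hrlt : r < k := by
    have hx1 := (hf1 A0 hA0').1
    have hmem : A0 ∈ {l | K.inc (f A0) l} \ K.linesIn H := ⟨(hf1 A0 hA0').2, hA0'.2⟩
    have hpos : 0 < ({l | K.inc (f A0) l} \ K.linesIn H).ncard := by
      rw [Set.ncard_pos ((hrankfin (f A0)).diff)]
      exact ⟨A0, hmem⟩
    have := hsplit (f A0) hx1
    have := hrval (f A0) hx1
    omega
  have hsurj : Set.SurjOn f (K.lns \ K.linesIn H) H := by
    intro x hx
    have h1 := hsplit x hx
    have h2 := hrval x hx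
    have hpos : 0 < ({l | K.inc x l} \ K.linesIn H).ncard := by omega
    obtain ⟨A, hA⟩ := Set.nonempty_of_ncard_ne_zero hpos.ne'
    have hAmem : A ∈ K.lns \ K.linesIn H := ⟨(hProper x A hA.1).2, hA.2⟩
    exact ⟨A, hAmem, hfeq A hAmem x hx hA.1⟩
  have hmaps : Set.MapsTo f (K.lns \ K.linesIn H) H := fun A hA => (hf1 A hA).1
  have hdomfin : (K.lns \ K.linesIn H).Finite := hLfin.subset Set.diff_subset
  have himg : f '' (K.lns \ K.linesIn H) = H :=
    Set.Subset.antisymm (hmaps.image_subset) hsurj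
  have hinj : Set.InjOn f (K.lns \ K.linesIn H) := by
    apply Set.injOn_of_ncard_image_eq _ hdomfin
    rw [himg, hdom]
  have hbij : Set.BijOn f (K.lns \ K.linesIn H) H := ⟨hmaps, hinj, hsurj⟩
  refine ⟨f, hf1, hbij, fun p => p, fun l => l, ?_, ?_, ?_⟩
  · have hpts : (IncStr.join (K.reduct H) (K.restrict H) f).pts = K.pts := by
      show (K.pts \ H) ∪ H = K.pts
      rw [Set.diff_union_self, Set.union_eq_self_of_subset_right hHsub]
    rw [hpts]
    exact Set.bijOn_id K.pts
  · have hlns : (IncStr.join (K.reduct H) (K.restrict H) f).lns = K.lns := by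
      show (K.lns \ K.linesIn H) ∪ K.linesIn H = K.lns
      rw [Set.diff_union_self, Set.union_eq_self_of_subset_right hLIsub]
    rw [hlns]
    exact Set.bijOn_id K.lns
  · intro p hp l hl
    show K.inc p l ↔ (K.reduct H).inc p l ∨ (K.restrict H).inc p l ∨
      (l ∈ (K.reduct H).lns ∧ p = f l)
    constructor
    · intro hinc
      by_cases hlin : l ∈ K.linesIn H
      · exact Or.inr (Or.inl ⟨hinc, ((hmemLI l).1 hlin).2 p hinc, hlin⟩)
      · by_cases hpH : p ∈ H
        · exact Or.inr (Or.inr ⟨⟨hl, hlin⟩, (hfeq l ⟨hl, hlin⟩ p hpH hinc).symm⟩)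
        · exact Or.inl ⟨hinc, ⟨hp, hpH⟩, hl, hlin⟩
    · rintro (h | h | ⟨hlm, rfl⟩)
      · exact h.1
      · exact h.1
      · exact (hf1 l hlm).2
end

section
/- Let X be a finite set with |X| = k + m − 1 for integers k, m ≥ 1, and let G(k,m) = ⟨℘_k(X), ℘_m(X), I⟩ with a I A iff |a ∩ A| = 1. Then G(k,m) is a binomial configuration of type B(k,m): it has C(m+k−1,k) points, each incident with exactly k lines, and C(m+k−1,m) lines, each incident with exactly m points. -/
/-- The combinatorial Grassmannian `G(k,m) = ⟨℘_k(X), ℘_m(X), I⟩` with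
`a I A ↔ |a ∩ A| = 1`, where `X` is the (finite) ambient type `α`. -/
def GrasKM (α : Type*) [DecidableEq α] (k m : ℕ) : IncStr (Finset α) (Finset α) where
  pts := {a : Finset α | a.card = k}
  lns := {A : Finset α | A.card = m}
  inc := fun a A => a.card = k ∧ A.card = m ∧ (a ∩ A).card = 1

section Helpers
variable {α : Type*} [Fintype α] [DecidableEq α]

lemma gras_inc_iff {c d : ℕ} (hc : 1 ≤ c) (hd : 1 ≤ d)
    (hcard : Fintype.card α = c + d - 1)
    {s t : Finset α} (hs : s.card = c) (ht : t.card = d) :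
    (s ∩ t).card = 1 ↔ sᶜ ⊆ t := by
  have h1 : (s ∪ t).card + (s ∩ t).card = c + d := by
    rw [Finset.card_union_add_card_inter, hs, ht]
  have h2 : (s ∪ t).card ≤ c + d - 1 := hcard ▸ Finset.card_le_univ _
  constructor
  · intro h
    have huniv : s ∪ t = Finset.univ := by
      apply Finset.eq_univ_of_card
      omega
    intro x hx
    have hxu : x ∈ s ∪ t := huniv ▸ Finset.mem_univ x
    simp only [Finset.mem_compl] at hx
    rcases Finset.mem_union.1 hxu with h' | h'
    · exact absurd h' hx
    · exact h'
  · intro h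
    have huniv : s ∪ t = Finset.univ := by
      apply Finset.eq_univ_of_forall
      intro x
      by_cases hx : x ∈ s
      · exact Finset.mem_union_left _ hx
      · exact Finset.mem_union_right _ (h (Finset.mem_compl.2 hx))
    have : (s ∪ t).card = c + d - 1 := by rw [huniv, Finset.card_univ, hcard]
    omega

lemma gras_nbrs_eq {c d : ℕ} (hc : 1 ≤ c) (hd : 1 ≤ d)
    (hcard : Fintype.card α = c + d - 1)
    {s : Finset α} (hs : s.card = c) :
    {t : Finset α | t.card = d ∧ (s ∩ t).card = 1}
      = ↑(s.image (fun x => insert x sᶜ)) := by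
  have hcompl : sᶜ.card = d - 1 := by
    rw [Finset.card_compl, hs, hcard]; omega
  ext t
  simp only [Set.mem_setOf_eq, Finset.coe_image, Set.mem_image, Finset.mem_coe]
  constructor
  · rintro ⟨htd, hone⟩
    have hsub : sᶜ ⊆ t := (gras_inc_iff hc hd hcard hs htd).1 hone
    have hdiff : (t \ sᶜ).card = 1 := by
      rw [Finset.card_sdiff_of_subset hsub, htd, hcompl]; omega
    obtain ⟨x, hx⟩ := Finset.card_eq_one.1 hdiff
    have hxt : x ∈ t \ sᶜ := hx ▸ Finset.mem_singleton_self x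
    have hxs : x ∈ s := by
      have := (Finset.mem_sdiff.1 hxt).2
      simpa using this
    refine ⟨x, hxs, ?_⟩
    have : t = (t \ sᶜ) ∪ sᶜ := (Finset.sdiff_union_of_subset hsub).symm
    rw [this, hx]
    simp [Finset.insert_eq, -Finset.singleton_union]
  · rintro ⟨x, hxs, rfl⟩
    have hxns : x ∉ sᶜ := by simpa using hxs
    have hcd : (insert x sᶜ).card = d := by
      rw [Finset.card_insert_of_notMem hxns, hcompl]; omega
    exact ⟨hcd, (gras_inc_iff hc hd hcard hs hcd).2 (Finset.subset_insert _ _)⟩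

lemma gras_nbrs_ncard {c d : ℕ} (hc : 1 ≤ c) (hd : 1 ≤ d)
    (hcard : Fintype.card α = c + d - 1)
    {s : Finset α} (hs : s.card = c) :
    {t : Finset α | t.card = d ∧ (s ∩ t).card = 1}.ncard = c := by
  rw [gras_nbrs_eq hc hd hcard hs, Set.ncard_coe_finset]
  rw [Finset.card_image_of_injOn, hs]
  intro x hx y hy hxy
  have hx' : x ∉ sᶜ := by simpa using hx
  have hy' : y ∉ sᶜ := by simpa using hy
  simp only [] at hxy
  have : x ∈ insert y sᶜ := hxy ▸ Finset.mem_insert_self x sᶜ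
  rcases Finset.mem_insert.1 this with h | h
  · exact h
  · exact absurd h hx'

end Helpers

/-- for `|X| = k + m - 1`, `G(k,m)` is a binomial configuration of
type `B(k,m)`: it has `C(m+k-1,k)` points of rank `k` and `C(m+k-1,m)` lines of
size `m`. -/
theorem statement9 {α : Type*} [Fintype α] [DecidableEq α] (k m : ℕ)
    (hk : 1 ≤ k) (hm : 1 ≤ m) (hcard : Fintype.card α = k + m - 1) :
    (GrasKM α k m).IsBinomial k m := by
  have hmk : m + k - 1 = k + m - 1 := by omega
  have hcard' : Fintype.card α = m + k - 1 := by omega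
  refine ⟨Set.toFinite _, Set.toFinite _, ⟨?_, ?_⟩, ?_, ?_, ?_, ?_⟩
  · intro p l hpl
    exact ⟨hpl.1, hpl.2.1⟩
  · rintro a b A B hab ⟨ha, hA, haA⟩ ⟨hb, -, hbA⟩ ⟨-, hB, haB⟩ ⟨-, -, hbB⟩
    have hiab : (a ∩ b).card < k := by
      rcases lt_or_eq_of_le (le_trans (Finset.card_le_card Finset.inter_subset_left) ha.le) with h | h
      · exact h
      · exfalso
        have h1 : a ∩ b = a := Finset.eq_of_subset_of_card_le Finset.inter_subset_left (by omega)
        have h2 : a ⊆ b := h1 ▸ Finset.inter_subset_right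
        exact hab (Finset.eq_of_subset_of_card_le h2 (by rw [ha, hb]))
    have hsub : ∀ {C : Finset α}, C.card = m → aᶜ ⊆ C → bᶜ ⊆ C → C = (a ∩ b)ᶜ := by
      intro C hC h1 h2
      have hsub : (a ∩ b)ᶜ ⊆ C := by
        rw [Finset.compl_inter]
        exact Finset.union_subset h1 h2
      have hcc : (a ∩ b)ᶜ.card = Fintype.card α - (a ∩ b).card := Finset.card_compl _
      refine (Finset.eq_of_subset_of_card_le hsub ?_).symm
      rw [hC, hcc, hcard]; omega
    have e1 : A = (a ∩ b)ᶜ :=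
      hsub hA ((gras_inc_iff hk hm hcard ha hA).1 haA)
        ((gras_inc_iff hk hm hcard hb hA).1 hbA)
    have e2 : B = (a ∩ b)ᶜ :=
      hsub hB ((gras_inc_iff hk hm hcard ha hB).1 haB)
        ((gras_inc_iff hk hm hcard hb hB).1 hbB)
    rw [e1, e2]
  · have : {a : Finset α | a.card = k} = ↑(Finset.univ.powersetCard k : Finset (Finset α)) := by
      ext t; simp
    rw [show (GrasKM α k m).pts = {a : Finset α | a.card = k} from rfl, this,
      Set.ncard_coe_finset, Finset.card_powersetCard, Finset.card_univ, hcard, hmk]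
  · have : {A : Finset α | A.card = m} = ↑(Finset.univ.powersetCard m : Finset (Finset α)) := by
      ext t; simp
    rw [show (GrasKM α k m).lns = {A : Finset α | A.card = m} from rfl, this,
      Set.ncard_coe_finset, Finset.card_powersetCard, Finset.card_univ, hcard']
  · intro p hp
    have hpk : p.card = k := hp
    have : {l | (GrasKM α k m).inc p l} = {t : Finset α | t.card = m ∧ (p ∩ t).card = 1} := by
      ext A
      simp only [GrasKM, Set.mem_setOf_eq, hpk, true_and]
    rw [IncStr.pointRank, this, gras_nbrs_ncard hk hm hcard hpk]
  · intro l hl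
    have hlm : l.card = m := hl
    have : {p | (GrasKM α k m).inc p l} = {t : Finset α | t.card = k ∧ (l ∩ t).card = 1} := by
      ext a
      simp only [GrasKM, Set.mem_setOf_eq, hlm, Finset.inter_comm a l]
      tauto
    rw [IncStr.lineSize, this, gras_nbrs_ncard hm hk hcard' hlm]
end

section
/- Let X be a finite set with |X| = n, let 1 ≤ k ≤ n − 2, fix i ∈ X, and consider the combinatorial Grassmannian G(X,k) = ⟨℘_k(X), ℘_{k+1}(X), ⊂⟩. Then the set X₂ = {a ∈ ℘_k(X) : i ∉ a} = ℘_k(X∖{i}) is a hyperplane of G(X,k), the set of lines of G(X,k) all of whose points lie in X₂ is ℘_{k+1}(X∖{i}), and the restriction G(X,k)↾X₂ equals G(X∖{i}, k). -/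
/-- for `|X| = n`, `1 ≤ k ≤ n - 2` and `i ∈ X`, the set
`X₂ = {a ∈ ℘_k(X) : i ∉ a} = ℘_k(X∖{i})` is a hyperplane of `G(X,k)`, the lines
all of whose points lie in `X₂` are exactly the `(k+1)`-subsets avoiding `i`, and
`G(X,k)↾X₂ = G(X∖{i}, k)`. -/
theorem statement10 {α : Type*} [Fintype α] [DecidableEq α] (n k : ℕ)
    (hn : Fintype.card α = n) (hk1 : 1 ≤ k) (hk2 : k ≤ n - 2) (i : α) :
    (Gras (Finset.univ : Finset α) k).IsHyperplane
      {a : Finset α | a.card = k ∧ i ∉ a} ∧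
    (Gras (Finset.univ : Finset α) k).linesIn {a : Finset α | a.card = k ∧ i ∉ a}
      = {A : Finset α | A.card = k + 1 ∧ i ∉ A} ∧
    (Gras (Finset.univ : Finset α) k).restrict {a : Finset α | a.card = k ∧ i ∉ a}
      = Gras (Finset.univ.erase i) k := by
  have hcard : k + 2 ≤ Fintype.card α := by omega
  have hlines : (Gras (Finset.univ : Finset α) k).linesIn {a : Finset α | a.card = k ∧ i ∉ a}
      = {A : Finset α | A.card = k + 1 ∧ i ∉ A} := by
    ext A
    simp only [IncStr.linesIn, Gras, Set.mem_setOf_eq, Set.mem_sep_iff]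
    constructor
    · rintro ⟨⟨-, hA⟩, h⟩
      refine ⟨hA, fun hiA => ?_⟩
      obtain ⟨j, hj, hji⟩ : ∃ j ∈ A, j ≠ i := by
        by_contra hc
        push_neg at hc
        have hsub : A ⊆ {i} := fun x hx => Finset.mem_singleton.2 (hc x hx)
        have := Finset.card_le_card hsub
        simp only [Finset.card_singleton, hA] at this
        omega
      have hx := h (A.erase j)
        ⟨Finset.subset_univ _, by rw [Finset.card_erase_of_mem hj, hA]; omega,
          Finset.subset_univ _, hA, Finset.erase_ssubset hj⟩
      exact hx.2 (Finset.mem_erase.2 ⟨Ne.symm hji, hiA⟩)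
    · rintro ⟨hA, hiA⟩
      refine ⟨⟨Finset.subset_univ _, hA⟩, fun x hx => ?_⟩
      exact ⟨hx.2.1, fun hix => hiA (hx.2.2.2.2.subset hix)⟩
  refine ⟨⟨⟨?_, ?_⟩, ?_, ?_⟩, hlines, ?_⟩
  · -- H ⊆ pts
    rintro a ⟨hak, -⟩
    exact ⟨Finset.subset_univ _, hak⟩
  · -- closure
    rintro a b A ⟨hak, hia⟩ ⟨hbk, hib⟩ hab ⟨-, -, -, hAk, haA⟩ ⟨-, -, -, -, hbA⟩ x ⟨-, hxk, -, -, hxA⟩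
    have hU : a ∪ b = A := by
      have h1 : a ∪ b ⊆ A := Finset.union_subset haA.subset hbA.subset
      have h2 : ¬ (a ∪ b).card ≤ k := by
        intro hle
        have ea : a = a ∪ b := Finset.eq_of_subset_of_card_le Finset.subset_union_left (by omega)
        have eb : b = a ∪ b := Finset.eq_of_subset_of_card_le Finset.subset_union_right (by omega)
        exact hab (ea.trans eb.symm)
      have h3 : (a ∪ b).card ≤ A.card := Finset.card_le_card h1
      exact Finset.eq_of_subset_of_card_le h1 (by omega)
    refine ⟨hxk, fun hix => ?_⟩
    have : i ∈ a ∪ b := hU ▸ hxA.subset hix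
    rcases Finset.mem_union.1 this with h | h
    · exact hia h
    · exact hib h
  · -- H ≠ pts
    intro heq
    have hle : k - 1 ≤ (Finset.univ.erase i).card := by
      rw [Finset.card_erase_of_mem (Finset.mem_univ i), Finset.card_univ]
      omega
    obtain ⟨t, htsub, htcard⟩ := Finset.exists_subset_card_eq hle
    have hit : i ∉ t := fun h => (Finset.mem_erase.1 (htsub h)).1 rfl
    have hmem : insert i t ∈ (Gras (Finset.univ : Finset α) k).pts := by
      refine ⟨Finset.subset_univ _, ?_⟩
      rw [Finset.card_insert_of_notMem hit, htcard]
      omega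
    rw [← heq] at hmem
    exact hmem.2 (Finset.mem_insert_self i t)
  · -- every line meets H
    rintro A ⟨-, hAk⟩
    by_cases hiA : i ∈ A
    · refine ⟨A.erase i, ⟨by rw [Finset.card_erase_of_mem hiA, hAk]; omega, Finset.notMem_erase i A⟩,
        Finset.subset_univ _, by rw [Finset.card_erase_of_mem hiA, hAk]; omega, Finset.subset_univ _,
        hAk, Finset.erase_ssubset hiA⟩
    · obtain ⟨j, hj⟩ : A.Nonempty := Finset.card_pos.1 (by omega)
      refine ⟨A.erase j, ⟨by rw [Finset.card_erase_of_mem hj, hAk]; omega,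
          fun h => hiA (Finset.erase_subset _ _ h)⟩,
        Finset.subset_univ _, by rw [Finset.card_erase_of_mem hj, hAk]; omega, Finset.subset_univ _,
        hAk, Finset.erase_ssubset hj⟩
  · -- restriction equality
    have hpts : {a : Finset α | a.card = k ∧ i ∉ a}
        = {a : Finset α | a ⊆ Finset.univ.erase i ∧ a.card = k} := by
      ext a
      simp only [Set.mem_setOf_eq, Finset.subset_erase, Finset.subset_univ, true_and]
      tauto
    have hinc : ((Gras (Finset.univ : Finset α) k).restrict
        {a : Finset α | a.card = k ∧ i ∉ a}).inc = (Gras (Finset.univ.erase i) k).inc := by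
      funext a A
      apply propext
      simp only [IncStr.restrict, hlines, Set.mem_setOf_eq]
      simp only [Gras, Set.mem_setOf_eq]
      constructor
      · rintro ⟨⟨-, hak, -, hAk, hsub⟩, ⟨-, hia⟩, hA, hiA⟩
        exact ⟨(Finset.subset_erase).2 ⟨Finset.subset_univ _, hia⟩, hak,
          (Finset.subset_erase).2 ⟨Finset.subset_univ _, hiA⟩, hAk, hsub⟩
      · rintro ⟨haE, hak, hAE, hAk, hsub⟩
        have hia : i ∉ a := (Finset.subset_erase.1 haE).2
        have hiA : i ∉ A := (Finset.subset_erase.1 hAE).2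
        exact ⟨⟨Finset.subset_univ _, hak, Finset.subset_univ _, hAk, hsub⟩,
          ⟨hak, hia⟩, hAk, hiA⟩
    show IncStr.mk _ _ _ = IncStr.mk _ _ _
    simp only [IncStr.restrict] at hinc ⊢
    rw [IncStr.mk.injEq]
    refine ⟨hpts, ?_, hinc⟩
    have := hlines
    rw [this]
    ext A
    simp only [Set.mem_setOf_eq, Finset.subset_erase, Finset.subset_univ, true_and, Gras]
    tauto
end

section
/- Let X be a finite set with |X| = n, let 2 ≤ k ≤ n − 2, fix i ∈ X, and consider G(X,k) = ⟨℘_k(X), ℘_{k+1}(X), ⊂⟩ with the hyperplane X₂ = ℘_k(X∖{i}). Then the map a ↦ a ∖ {i} is an isomorphism from the reduct G(X,k)∖X₂ (whose points are {a ∈ ℘_k(X) : i ∈ a} and whose lines are {A ∈ ℘_{k+1}(X) : i ∈ A}) onto the combinatorial Grassmannian G(X∖{i}, k−1). -/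
/-! Since `k ≥ 1`, every `(k+1)`-set through `i` contains a `k`-set through `i`, so the lines
of `G(X,k)` lying in `℘_k(X∖{i})` are exactly those missing `i`, and the reduct consists of the
sets through `i`. On these, `a ↦ a ∖ {i}` is inverse to `b ↦ b ∪ {i}`, and strict inclusion
between sets through `i` survives removing `i`. -/

namespace IncStr

variable {P L : Type*}

lemma reduct_inc_iff (K : IncStr P L) (H : Set P) {p : P} {l : L}
    (hp : p ∈ (K.reduct H).pts) (hl : l ∈ (K.reduct H).lns) :
    (K.reduct H).inc p l ↔ K.inc p l :=
  ⟨And.left, fun h => ⟨h, hp, hl⟩⟩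

end IncStr

namespace Finset

variable {α : Type*} [DecidableEq α] {i : α} {a A : Finset α}

lemma erase_subset_erase_iff_of_mem (hA : i ∈ A) : a.erase i ⊆ A.erase i ↔ a ⊆ A := by
  rw [← subset_insert_iff, insert_erase hA]

lemma erase_ssubset_erase_iff_of_mem (ha : i ∈ a) (hA : i ∈ A) :
    a.erase i ⊂ A.erase i ↔ a ⊂ A := by
  simp only [ssubset_def, erase_subset_erase_iff_of_mem ha, erase_subset_erase_iff_of_mem hA]

lemma bijOn_erase_card_succ {Y : Finset α} (hi : i ∈ Y) (m : ℕ) :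
    Set.BijOn (fun a => a.erase i) {a | a ⊆ Y ∧ a.card = m + 1 ∧ i ∈ a}
      {b | b ⊆ Y.erase i ∧ b.card = m} := by
  refine ⟨?_, (erase_injOn' i).mono fun a ha => ha.2.2, ?_⟩
  · rintro a ⟨haY, hcard, hia⟩
    exact ⟨erase_subset_erase i haY, by rw [card_erase_of_mem hia, hcard, Nat.add_sub_cancel]⟩
  · rintro b ⟨hbY, hcard⟩
    have hib : i ∉ b := fun h => (mem_erase.mp (hbY h)).1 rfl
    refine ⟨insert i b, ⟨?_, by rw [card_insert_of_notMem hib, hcard], mem_insert_self i b⟩,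
      erase_insert hib⟩
    exact insert_subset hi (hbY.trans (erase_subset i Y))

end Finset

namespace Gras

open Finset

variable {α : Type*} {Y : Finset α} {k : ℕ}

lemma reduct_avoiding_pts (i : α) :
    ((Gras Y k).reduct {a | a.card = k ∧ i ∉ a}).pts = {a | a ⊆ Y ∧ a.card = k ∧ i ∈ a} := by
  ext a
  simp only [IncStr.reduct, Gras, Set.mem_sdiff, Set.mem_ofPred_eq, not_and, not_not]
  tauto

variable [DecidableEq α]

lemma mem_linesIn_avoiding_iff (hk : 1 ≤ k) (i : α) (A : Finset α) :
    A ∈ (Gras Y k).linesIn {a | a.card = k ∧ i ∉ a} ↔ A ⊆ Y ∧ A.card = k + 1 ∧ i ∉ A := by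
  constructor
  · rintro ⟨⟨hAY, hcard⟩, hall⟩
    refine ⟨hAY, hcard, fun hiA => ?_⟩
    obtain ⟨j, hjA, hji⟩ := exists_mem_ne (by omega : 1 < A.card) i
    have hinc : (Gras Y k).inc (A.erase j) A :=
      ⟨(erase_subset j A).trans hAY, by rw [card_erase_of_mem hjA, hcard, Nat.add_sub_cancel],
        hAY, hcard, erase_ssubset hjA⟩
    exact (hall _ hinc).2 (mem_erase.mpr ⟨hji.symm, hiA⟩)
  · rintro ⟨hAY, hcard, hiA⟩
    exact ⟨⟨hAY, hcard⟩, fun x ⟨_, hxk, _, _, hxA⟩ => ⟨hxk, fun hix => hiA (hxA.subset hix)⟩⟩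

lemma reduct_avoiding_lns (hk : 1 ≤ k) (i : α) :
    ((Gras Y k).reduct {a | a.card = k ∧ i ∉ a}).lns
      = {A | A ⊆ Y ∧ A.card = k + 1 ∧ i ∈ A} := by
  ext A
  simp only [IncStr.reduct, Set.mem_sdiff, mem_linesIn_avoiding_iff hk]
  simp only [Gras, Set.mem_ofPred_eq, not_and, not_not]
  tauto

theorem isIso_reduct_avoiding (hk : 1 ≤ k) {i : α} (hi : i ∈ Y) :
    IncStr.IsIso ((Gras Y k).reduct {a | a.card = k ∧ i ∉ a}) (Gras (Y.erase i) (k - 1))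
      (fun a => a.erase i) (fun A => A.erase i) := by
  obtain ⟨m, rfl⟩ : ∃ m, k = m + 1 := ⟨k - 1, by omega⟩
  rw [IncStr.IsIso, reduct_avoiding_pts, reduct_avoiding_lns hk, Nat.add_sub_cancel]
  refine ⟨bijOn_erase_card_succ hi m, bijOn_erase_card_succ hi (m + 1), ?_⟩
  intro a ha A hA
  have ha' := (bijOn_erase_card_succ hi m).mapsTo ha
  have hA' := (bijOn_erase_card_succ hi (m + 1)).mapsTo hA
  rw [IncStr.reduct_inc_iff _ _ (by rwa [reduct_avoiding_pts])
    (by rwa [reduct_avoiding_lns hk])]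
  simp only [Gras, ha.1, ha.2.1, hA.1, hA.2.1, ha'.1, ha'.2, hA'.1, hA'.2, true_and,
    erase_ssubset_erase_iff_of_mem ha.2.2 hA.2.2]

end Gras

theorem statement11_general {α : Type*} [Fintype α] [DecidableEq α] (k : ℕ)
    (hk1 : 2 ≤ k) (i : α) :
    ((Gras (Finset.univ : Finset α) k).reduct {a : Finset α | a.card = k ∧ i ∉ a}).pts
      = {a : Finset α | a.card = k ∧ i ∈ a} ∧
    ((Gras (Finset.univ : Finset α) k).reduct {a : Finset α | a.card = k ∧ i ∉ a}).lns
      = {A : Finset α | A.card = k + 1 ∧ i ∈ A} ∧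
    IncStr.IsIso
      ((Gras (Finset.univ : Finset α) k).reduct {a : Finset α | a.card = k ∧ i ∉ a})
      (Gras (Finset.univ.erase i) (k - 1))
      (fun a => a.erase i) (fun A => A.erase i) := by
  have hk : 1 ≤ k := by omega
  refine ⟨?_, ?_, Gras.isIso_reduct_avoiding hk (Finset.mem_univ i)⟩
  · simp only [Gras.reduct_avoiding_pts, Finset.subset_univ, true_and]
  · simp only [Gras.reduct_avoiding_lns hk, Finset.subset_univ, true_and]

/-- for `|X| = n`, `2 ≤ k ≤ n - 2` and `i ∈ X`, the reduct
`G(X,k)∖X₂` (where `X₂ = ℘_k(X∖{i})`) has points `{a ∈ ℘_k(X) : i ∈ a}` and lines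
`{A ∈ ℘_{k+1}(X) : i ∈ A}`, and `a ↦ a∖{i}` is an isomorphism of it onto
`G(X∖{i}, k-1)`. -/
theorem statement11 {α : Type*} [Fintype α] [DecidableEq α] (n k : ℕ)
    (hn : Fintype.card α = n) (hk1 : 2 ≤ k) (hk2 : k ≤ n - 2) (i : α) :
    ((Gras (Finset.univ : Finset α) k).reduct {a : Finset α | a.card = k ∧ i ∉ a}).pts
      = {a : Finset α | a.card = k ∧ i ∈ a} ∧
    ((Gras (Finset.univ : Finset α) k).reduct {a : Finset α | a.card = k ∧ i ∉ a}).lns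
      = {A : Finset α | A.card = k + 1 ∧ i ∈ A} ∧
    IncStr.IsIso
      ((Gras (Finset.univ : Finset α) k).reduct {a : Finset α | a.card = k ∧ i ∉ a})
      (Gras (Finset.univ.erase i) (k - 1))
      (fun a => a.erase i) (fun A => A.erase i) :=
  statement11_general k hk1 i
end

section
/- Let X be a finite set, let 2 ≤ k ≤ |X| − 2, and fix i ∈ X. Then G(X,k) is isomorphic to G(X∖{i}, k−1) ⋊_∞ G(X∖{i}, k), where ∞ maps each line B ∈ ℘_k(X∖{i}) of G(X∖{i}, k−1) to the point B of G(X∖{i}, k) (equivalently, under the identification of G(X∖{i},k−1) with the reduct of G(X,k), each line A ∈ ℘_{k+1}(X) with i ∈ A is sent to A∖{i}). -/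
private lemma erase_bijOn_aux {α : Type*} [Fintype α] [DecidableEq α] (i : α) (n : ℕ)
    (hn : 1 ≤ n) :
    Set.BijOn (fun a : Finset α => a.erase i)
      {a | a ⊆ Finset.univ ∧ a.card = n}
      ({a | a ⊆ Finset.univ.erase i ∧ a.card = n - 1} ∪
       {a | a ⊆ Finset.univ.erase i ∧ a.card = n}) := by
  refine ⟨?_, ?_, ?_⟩
  · rintro a ⟨-, hc⟩
    by_cases h : i ∈ a
    · left
      exact ⟨Finset.erase_subset_erase i (Finset.subset_univ a),
        by rw [Finset.card_erase_of_mem h, hc]⟩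
    · right
      simp only [Set.mem_setOf_eq, Finset.erase_eq_of_notMem h]
      exact ⟨Finset.subset_erase.mpr ⟨Finset.subset_univ a, h⟩, hc⟩
  · rintro a ⟨-, hca⟩ b ⟨-, hcb⟩ hab
    simp only at hab
    by_cases ha : i ∈ a <;> by_cases hb : i ∈ b
    · rw [← Finset.insert_erase ha, ← Finset.insert_erase hb, hab]
    · exfalso
      rw [Finset.erase_eq_of_notMem hb] at hab
      have h1 := Finset.card_erase_of_mem ha
      rw [hab, hcb, hca] at h1; omega
    · exfalso
      rw [Finset.erase_eq_of_notMem ha] at hab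
      have h1 := Finset.card_erase_of_mem hb
      rw [← hab, hca, hcb] at h1; omega
    · rwa [Finset.erase_eq_of_notMem ha, Finset.erase_eq_of_notMem hb] at hab
  · rintro b (⟨hbs, hbc⟩ | ⟨hbs, hbc⟩)
    · have hib : i ∉ b := fun h => (Finset.mem_erase.mp (hbs h)).1 rfl
      refine ⟨insert i b, ⟨Finset.subset_univ _, ?_⟩, ?_⟩
      · rw [Finset.card_insert_of_notMem hib, hbc]; omega
      · simp [Finset.erase_insert hib]
    · have hib : i ∉ b := fun h => (Finset.mem_erase.mp (hbs h)).1 rfl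
      exact ⟨b, ⟨Finset.subset_univ _, hbc⟩, Finset.erase_eq_of_notMem hib⟩

/-- for `2 ≤ k ≤ |X| - 2` and `i ∈ X`,
`G(X,k) ≅ G(X∖{i}, k-1) ⋊_∞ G(X∖{i}, k)`, where `∞` sends each line
`B ∈ ℘_k(X∖{i})` of `G(X∖{i}, k-1)` to the point `B` of `G(X∖{i}, k)`
(here the two summands have disjoint point sets and disjoint line sets, so `∞`
is the identity map of the ambient type). -/
theorem statement12 {α : Type*} [Fintype α] [DecidableEq α] (k : ℕ)
    (hk1 : 2 ≤ k) (hk2 : k ≤ Fintype.card α - 2) (i : α) :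
    IncStr.Isomorphic (Gras (Finset.univ : Finset α) k)
      (IncStr.join (Gras (Finset.univ.erase i) (k - 1))
        (Gras (Finset.univ.erase i) k) (fun B => B)) := by
  classical
  have hkm : k - 1 + 1 = k := by omega
  refine ⟨fun a => a.erase i, fun A => A.erase i, ?_, ?_, ?_⟩
  · -- points
    have := erase_bijOn_aux i k (by omega)
    simpa [Gras, IncStr.join, hkm] using this
  · -- lines
    have := erase_bijOn_aux i (k + 1) (by omega)
    simp only [Nat.add_sub_cancel] at this
    simpa [Gras, IncStr.join, hkm] using this
  · -- incidence
    rintro a ⟨-, hca⟩ A ⟨-, hcA⟩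
    simp only [Gras, IncStr.join, Set.mem_setOf_eq] at *
    constructor
    · rintro ⟨-, -, -, -, hss⟩
      by_cases ha : i ∈ a <;> by_cases hA : i ∈ A
      · left
        refine ⟨Finset.erase_subset_erase i (Finset.subset_univ a),
          by rw [Finset.card_erase_of_mem ha, hca],
          Finset.erase_subset_erase i (Finset.subset_univ A),
          by rw [Finset.card_erase_of_mem hA, hcA]; omega, ?_⟩
        refine Finset.ssubset_iff_subset_ne.mpr
          ⟨Finset.erase_subset_erase i hss.subset, ?_⟩
        intro h
        have h1 := congrArg Finset.card h
        rw [Finset.card_erase_of_mem ha, Finset.card_erase_of_mem hA, hca, hcA] at h1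
        omega
      · exact absurd (hss.subset ha) hA
      · right; right
        refine ⟨⟨Finset.erase_subset_erase i (Finset.subset_univ A),
          by rw [Finset.card_erase_of_mem hA, hcA]; omega⟩, ?_⟩
        rw [Finset.erase_eq_of_notMem ha]
        refine Finset.eq_of_subset_of_card_le
          (Finset.subset_erase.mpr ⟨hss.subset, ha⟩) ?_
        rw [Finset.card_erase_of_mem hA, hcA, hca]; omega
      · right; left
        rw [Finset.erase_eq_of_notMem ha, Finset.erase_eq_of_notMem hA]
        exact ⟨Finset.subset_erase.mpr ⟨Finset.subset_univ a, ha⟩, hca,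
          Finset.subset_erase.mpr ⟨Finset.subset_univ A, hA⟩, hcA, hss⟩
    · rintro (⟨h1, h2, h3, h4, h5⟩ | ⟨h1, h2, h3, h4, h5⟩ | ⟨⟨h1, h2⟩, h3⟩)
      · have hia : i ∈ a := by
          by_contra h
          rw [Finset.erase_eq_of_notMem h, hca] at h2; omega
        have hiA : i ∈ A := by
          by_contra h
          rw [Finset.erase_eq_of_notMem h, hcA] at h4; omega
        have hsub : a ⊆ A := by
          intro x hx
          by_cases hxi : x = i
          · rwa [hxi]
          · exact Finset.mem_of_mem_erase (h5.subset (Finset.mem_erase.mpr ⟨hxi, hx⟩))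
        refine ⟨Finset.subset_univ a, hca, Finset.subset_univ A, hcA, ?_⟩
        exact Finset.ssubset_iff_subset_ne.mpr
          ⟨hsub, fun h => by rw [h, hcA] at hca; omega⟩
      · have hia : i ∉ a := fun h => by
          rw [Finset.card_erase_of_mem h, hca] at h2; omega
        have hiA : i ∉ A := fun h => by
          rw [Finset.card_erase_of_mem h, hcA] at h4; omega
        rw [Finset.erase_eq_of_notMem hia, Finset.erase_eq_of_notMem hiA] at h5
        exact ⟨Finset.subset_univ a, hca, Finset.subset_univ A, hcA, h5⟩
      · have hiA : i ∈ A := by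
          by_contra h
          rw [Finset.erase_eq_of_notMem h, hcA] at h2; omega
        have hia : i ∉ a := fun h => by
          have hc := congrArg Finset.card h3
          rw [Finset.card_erase_of_mem h, Finset.card_erase_of_mem hiA, hca, hcA] at hc
          omega
        rw [Finset.erase_eq_of_notMem hia] at h3
        refine ⟨Finset.subset_univ a, hca, Finset.subset_univ A, hcA, ?_⟩
        rw [h3]
        exact Finset.erase_ssubset hiA
end

section
/- Let X be a finite set with |X| = m ≥ 2 and let k ≥ 2. The combinatorial Veronesian V(X,k), with points the multisets of size k over X, lines the multisets of size < k over X, and a point f incident with a line e iff f = e·x^{k−|e|} for some x ∈ X, is a binomial configuration of type B(k,m): it is a partial linear space with C(m+k−1,k) points, each incident with exactly k lines, and C(m+k−1,m) lines, each incident with exactly m points. -/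
section Aux

variable {α : Type*} [Fintype α] [DecidableEq α]

/-- Cutting down a common replicate tail: key lemma for partial linearity. -/
lemma ver_inter (A : Multiset α) (r : ℕ) {x y : α} (hxy : x ≠ y) :
    (A + Multiset.replicate r x) ∩ (A + Multiset.replicate r y) = A := by
  apply Multiset.ext.mpr
  intro z
  rw [Multiset.count_inter, Multiset.count_add, Multiset.count_add,
    Multiset.count_replicate, Multiset.count_replicate]
  split_ifs with h1 h2 <;> try omega
  exact absurd (h1.trans h2.symm) hxy

lemma sum_count_univ (f : Multiset α) : ∑ x : α, f.count x = Multiset.card f := by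
  rw [← Multiset.toFinset_sum_count_eq]
  exact (Finset.sum_subset (Finset.subset_univ _)
    (fun x _ hx => Multiset.count_eq_zero_of_notMem (by simpa using hx))).symm

/-- The points of the Veronesian are just `Sym α k`. -/
def verPtsEquiv (k : ℕ) :
    {f : Multiset α | (∀ x ∈ f, x ∈ (Finset.univ : Finset α)) ∧ Multiset.card f = k}
      ≃ Sym α k where
  toFun f := ⟨f.1, f.2.2⟩
  invFun s := ⟨s.1, fun x _ => Finset.mem_univ x, s.2⟩
  left_inv _ := rfl
  right_inv _ := rfl

lemma symHeqAux {n m : ℕ} (s : Multiset α) (h1 : Multiset.card s = n)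
    (h2 : Multiset.card s = m) : HEq (⟨s, h1⟩ : Sym α n) (⟨s, h2⟩ : Sym α m) := by
  subst h1
  subst h2
  rfl

/-- The lines of the Veronesian are the disjoint union of the `Sym α i`, `i < k`. -/
def verLnsEquiv (k : ℕ) :
    {e : Multiset α | (∀ x ∈ e, x ∈ (Finset.univ : Finset α)) ∧ Multiset.card e < k}
      ≃ (i : Fin k) × Sym α i where
  toFun e := ⟨⟨Multiset.card e.1, e.2.2⟩, ⟨e.1, rfl⟩⟩
  invFun p := ⟨p.2.1, fun x _ => Finset.mem_univ x, by rw [p.2.2]; exact p.1.2⟩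
  left_inv _ := rfl
  right_inv := fun ⟨i, s⟩ => Sigma.ext (Fin.ext s.2) (symHeqAux s.1 rfl s.2)

lemma sum_choose_aux (m k : ℕ) :
    ∑ i ∈ Finset.range k, (m + i).choose i = (m + k).choose (m + 1) := by
  induction k with
  | zero => simp [Nat.choose_eq_zero_of_lt (by omega : m < m + 1)]
  | succ k ih =>
    rw [Finset.sum_range_succ, ih]
    have h1 : (m + k).choose k = (m + k).choose m := by
      rw [← Nat.choose_symm (by omega : k ≤ m + k)]
      congr 1
      omega
    rw [h1, show m + (k + 1) = (m + k) + 1 by omega, Nat.choose_succ_succ]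
    simp only [Nat.succ_eq_add_one]
    omega

lemma rank_aux {k : ℕ} (hk : 1 ≤ k) (f : Multiset α) (hf : Multiset.card f = k) :
    {l : Multiset α | (Ver (Finset.univ : Finset α) k).inc f l}.ncard = k := by
  set g : (_ : α) × ℕ → Multiset α := fun p => f - Multiset.replicate p.2 p.1 with hg
  set T : Finset ((_ : α) × ℕ) :=
    Finset.univ.sigma fun x => Finset.Icc 1 (f.count x) with hT
  have hmemT : ∀ (x : α) (r : ℕ), (⟨x, r⟩ : (_ : α) × ℕ) ∈ T ↔ 1 ≤ r ∧ r ≤ f.count x := by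
    intro x r
    simp [hT, Finset.mem_sigma, Finset.mem_Icc]
  have hset : {l : Multiset α | (Ver (Finset.univ : Finset α) k).inc f l} = g '' ↑T := by
    ext l
    constructor
    · rintro ⟨-, -, -, hlk, x, -, hfx⟩
      refine ⟨⟨x, k - Multiset.card l⟩, ?_, ?_⟩
      · rw [Finset.mem_coe, hmemT]
        refine ⟨?_, ?_⟩
        · omega
        · rw [hfx, Multiset.count_add, Multiset.count_replicate, if_pos rfl]
          omega
      · simp only [hg]
        rw [hfx, add_tsub_cancel_right]
    · rintro ⟨⟨x, r⟩, hp, rfl⟩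
      rw [Finset.mem_coe, hmemT] at hp
      obtain ⟨hr1, hr2⟩ := hp
      have hrep : Multiset.replicate r x ≤ f := Multiset.le_count_iff_replicate_le.mp hr2
      have hrk : r ≤ k := by
        have := Multiset.count_le_card x f
        omega
      have hcard : Multiset.card (g ⟨x, r⟩) = k - r := by
        simp only [hg]
        rw [Multiset.card_sub hrep, Multiset.card_replicate, hf]
      refine ⟨fun y _ => Finset.mem_univ y, hf, fun y _ => Finset.mem_univ y, ?_, ?_⟩
      · omega
      · refine ⟨x, Finset.mem_univ x, ?_⟩
        rw [hcard, show k - (k - r) = r by omega]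
        exact (tsub_add_cancel_of_le hrep).symm
  have hinj : Set.InjOn g ↑T := by
    rintro ⟨x, r⟩ h1 ⟨y, s⟩ h2 heq
    rw [Finset.mem_coe, hmemT] at h1 h2
    simp only [hg] at heq
    have hrx : Multiset.replicate r x ≤ f := Multiset.le_count_iff_replicate_le.mp h1.2
    have hsy : Multiset.replicate s y ≤ f := Multiset.le_count_iff_replicate_le.mp h2.2
    have hcards : Multiset.card f - r = Multiset.card f - s := by
      have := congrArg Multiset.card heq
      rwa [Multiset.card_sub hrx, Multiset.card_sub hsy, Multiset.card_replicate,
        Multiset.card_replicate] at this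
    have hrs : r = s := by
      have h1' := Multiset.count_le_card x f
      have h2' := Multiset.count_le_card y f
      omega
    have hxy : x = y := by
      by_contra hxy
      have := congrArg (Multiset.count x) heq
      rw [Multiset.count_sub, Multiset.count_sub, Multiset.count_replicate,
        Multiset.count_replicate, if_pos rfl, if_neg (Ne.symm hxy)] at this
      omega
    subst hxy
    subst hrs
    rfl
  rw [hset, Set.ncard_image_of_injOn hinj, Set.ncard_coe_finset, hT, Finset.card_sigma]
  simp only [Nat.card_Icc]
  rw [show ∀ s : Finset α, ∑ x ∈ s, (f.count x + 1 - 1) = ∑ x ∈ s, f.count x from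
    fun s => Finset.sum_congr rfl (fun x _ => by omega)]
  rw [sum_count_univ, hf]

lemma size_aux {k : ℕ} (e : Multiset α) (he : Multiset.card e < k) :
    {p : Multiset α | (Ver (Finset.univ : Finset α) k).inc p e}.ncard = Fintype.card α := by
  have hset : {p : Multiset α | (Ver (Finset.univ : Finset α) k).inc p e} =
      (fun x => e + Multiset.replicate (k - Multiset.card e) x) '' Set.univ := by
    ext p
    constructor
    · rintro ⟨-, -, -, -, x, -, rfl⟩
      exact ⟨x, Set.mem_univ x, rfl⟩
    · rintro ⟨x, -, rfl⟩
      refine ⟨fun y _ => Finset.mem_univ y, ?_, fun y _ => Finset.mem_univ y, he,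
        x, Finset.mem_univ x, rfl⟩
      rw [Multiset.card_add, Multiset.card_replicate]
      omega
  have hinj : Function.Injective
      (fun x : α => e + Multiset.replicate (k - Multiset.card e) x) := by
    intro x y h
    by_contra hxy
    have := congrArg (Multiset.count x) h
    rw [Multiset.count_add, Multiset.count_add, Multiset.count_replicate,
      Multiset.count_replicate, if_pos rfl, if_neg (Ne.symm hxy)] at this
    omega
  rw [hset, Set.ncard_image_of_injective _ hinj, Set.ncard_univ, Nat.card_eq_fintype_card]

end Aux

/-- for `|X| = m ≥ 2` and `k ≥ 2`, the combinatorial Veronesian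
`V(X,k)` is a binomial configuration of type `B(k,m)`. -/
theorem statement13 {α : Type*} [Fintype α] [DecidableEq α] (m k : ℕ)
    (hm : 2 ≤ m) (hk : 2 ≤ k) (hcard : Fintype.card α = m) :
    (Ver (Finset.univ : Finset α) k).IsBinomial k m := by
  subst hcard
  refine ⟨?_, ?_, ⟨?_, ?_⟩, ?_, ?_, ?_, ?_⟩
  · -- pts finite
    haveI : Finite ((Ver (Finset.univ : Finset α) k).pts : Set (Multiset α)) :=
      Finite.of_equiv _ (verPtsEquiv k).symm
    exact Set.toFinite _
  · -- lns finite
    haveI : Finite ((Ver (Finset.univ : Finset α) k).lns : Set (Multiset α)) :=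
      Finite.of_equiv _ (verLnsEquiv k).symm
    exact Set.toFinite _
  · -- proper
    exact fun p l h => ⟨⟨h.1, h.2.1⟩, h.2.2.1, h.2.2.2.1⟩
  · -- partial linear space
    intro a b A B hab hAa hAb hBa hBb
    obtain ⟨-, -, -, hAk, x, -, hax⟩ := hAa
    obtain ⟨-, -, -, -, y, -, hby⟩ := hAb
    obtain ⟨-, -, -, hBk, x', -, hax'⟩ := hBa
    obtain ⟨-, -, -, -, y', -, hby'⟩ := hBb
    have hxy : x ≠ y := by
      rintro rfl
      exact hab (hax.trans hby.symm)
    have hxy' : x' ≠ y' := by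
      rintro rfl
      exact hab (hax'.trans hby'.symm)
    have hA : a ∩ b = A := by rw [hax, hby]; exact ver_inter A _ hxy
    have hB : a ∩ b = B := by rw [hax', hby']; exact ver_inter B _ hxy'
    rw [← hA, ← hB]
  · -- number of points
    rw [show (Ver (Finset.univ : Finset α) k).pts =
        {f : Multiset α | (∀ x ∈ f, x ∈ (Finset.univ : Finset α)) ∧ Multiset.card f = k}
        from rfl,
      ← Nat.card_coe_set_eq, Nat.card_congr (verPtsEquiv k),
      Nat.card_eq_fintype_card, Sym.card_sym_eq_choose]
  · -- number of lines
    rw [show (Ver (Finset.univ : Finset α) k).lns =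
        {e : Multiset α | (∀ x ∈ e, x ∈ (Finset.univ : Finset α)) ∧ Multiset.card e < k}
        from rfl,
      ← Nat.card_coe_set_eq, Nat.card_congr (verLnsEquiv k),
      Nat.card_eq_fintype_card, Fintype.card_sigma]
    obtain ⟨m', hm'⟩ : ∃ m', Fintype.card α = m' + 1 :=
      ⟨Fintype.card α - 1, by omega⟩
    calc ∑ i : Fin k, Fintype.card (Sym α i)
        = ∑ i ∈ Finset.range k, (m' + i).choose i := by
          rw [← Fin.sum_univ_eq_sum_range]
          refine Finset.sum_congr rfl fun i _ => ?_
          rw [Sym.card_sym_eq_choose, hm']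
          congr 1
          omega
      _ = (Fintype.card α + k - 1).choose (Fintype.card α) := by
          rw [sum_choose_aux, hm']
          congr 1
          omega
  · -- point rank
    intro p hp
    exact rank_aux (by omega) p hp.2
  · -- line size
    intro l hl
    exact size_aux l hl.2
end

section
/- Let X be a finite set with |X| = m ≥ 2, let k ≥ 2, and fix a ∈ X. Then the set X₂ = {f ∈ 𝔶_k(X) : a ∈ supp(f)} is a hyperplane of the combinatorial Veronesian V(X,k); the set of lines of V(X,k) all of whose points lie in X₂ is {e ∈ 𝔶_{<k}(X) : a ∈ supp(e)}; for every line e with a ∉ supp(e), the unique point of X₂ incident with e is e·a^{k−|e|}; and the map f ↦ f·a is an isomorphism from V(X,k−1) onto the restriction V(X,k)↾X₂. -/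
/-!
The point `e·x^{k-|e|}` of a line `e` contains `a` exactly when `a ∈ e` or `x = a`. Hence every
point of a line through `a` lies in `X₂`, while a line missing `a` meets `X₂` only in
`e·a^{k-|e|}`; as soon as `X` has a second element `b`, the point `e·b^{k-|e|}` shows that such a
line is not contained in `X₂`. This gives the hyperplane and the description of `L[X₂]`.
Adjoining one copy of `a` is a bijection from `𝔶_j(X)` onto the multisets of size `j + 1`
containing `a` (the inverse erases one `a`), and `f·a = (e·a)·x^{k-|e·a|}` iff
`f = e·x^{k-1-|e|}`, which gives the isomorphism.
-/

namespace Multiset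

lemma bijOn_add_singleton {α : Type*} [DecidableEq α] (a : α) (P : ℕ → Prop) :
    Set.BijOn (· + {a}) {f : Multiset α | P (card f + 1)}
      {f : Multiset α | P (card f) ∧ a ∈ f} := by
  refine ⟨fun f hf => ⟨by simpa using hf, by simp⟩, fun f _ g _ h => add_right_cancel h,
    fun f ⟨hf, haf⟩ => ⟨f.erase a, ?_, ?_⟩⟩
  · show P (card (f.erase a) + 1)
    rwa [card_erase_add_one haf]
  · show f.erase a + {a} = f
    rw [add_comm, singleton_add, cons_erase haf]

end Multiset

namespace Ver

variable {α : Type*} [Fintype α]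

@[simp]
lemma mem_univ_pts {k : ℕ} {f : Multiset α} :
    f ∈ (Ver Finset.univ k).pts ↔ Multiset.card f = k := by
  simp [Ver]

@[simp]
lemma mem_univ_lns {k : ℕ} {e : Multiset α} :
    e ∈ (Ver Finset.univ k).lns ↔ Multiset.card e < k := by
  simp [Ver]

lemma univ_inc_iff {k : ℕ} {f e : Multiset α} :
    (Ver Finset.univ k).inc f e ↔
      Multiset.card e < k ∧ ∃ x, f = e + Multiset.replicate (k - Multiset.card e) x := by
  simp only [Ver, Finset.mem_univ, implies_true, true_and]
  constructor
  · rintro ⟨-, he, x, rfl⟩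
    exact ⟨he, x, rfl⟩
  · rintro ⟨he, x, rfl⟩
    exact ⟨by simp; omega, he, x, rfl⟩

lemma univ_inc_add_replicate {k : ℕ} {e : Multiset α} (he : Multiset.card e < k) (x : α) :
    (Ver Finset.univ k).inc (e + Multiset.replicate (k - Multiset.card e) x) e :=
  univ_inc_iff.2 ⟨he, x, rfl⟩

lemma add_replicate_mem {k : ℕ} {e : Multiset α} (he : Multiset.card e < k) (a : α) :
    e + Multiset.replicate (k - Multiset.card e) a ∈
      {f : Multiset α | Multiset.card f = k ∧ a ∈ f} :=
  ⟨(univ_inc_add_replicate he a).2.1,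
    Multiset.mem_add.2 (Or.inr (Multiset.mem_replicate.2 ⟨by omega, rfl⟩))⟩

lemma mem_of_univ_inc {k : ℕ} {a : α} {f e : Multiset α} (h : (Ver Finset.univ k).inc f e)
    (hae : a ∈ e) : a ∈ f := by
  obtain ⟨-, x, rfl⟩ := univ_inc_iff.1 h
  exact Multiset.mem_add.2 (Or.inl hae)

lemma eq_add_replicate_of_univ_inc {k : ℕ} {a : α} {f e : Multiset α}
    (h : (Ver Finset.univ k).inc f e) (haf : a ∈ f) (hae : a ∉ e) :
    f = e + Multiset.replicate (k - Multiset.card e) a := by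
  obtain ⟨-, x, rfl⟩ := univ_inc_iff.1 h
  rcases Multiset.mem_add.1 haf with ha | ha
  · exact absurd ha hae
  · rw [Multiset.eq_of_mem_replicate ha]

lemma univ_inc_add_singleton_iff {n : ℕ} {a : α} {p e : Multiset α} :
    (Ver Finset.univ (n + 1)).inc (p + {a}) (e + {a}) ↔ (Ver Finset.univ n).inc p e := by
  simp only [univ_inc_iff, Multiset.card_add, Multiset.card_singleton, Nat.add_sub_add_right,
    Nat.add_lt_add_iff_right, add_right_comm e {a}, add_left_inj]

lemma isSubspace_univ (k : ℕ) (a : α) :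
    (Ver Finset.univ k).IsSubspace {f : Multiset α | Multiset.card f = k ∧ a ∈ f} := by
  refine ⟨fun f hf => mem_univ_pts.2 hf.1, ?_⟩
  rintro p q A ⟨-, hap⟩ ⟨-, haq⟩ hpq hpA hqA x hxA
  have haA : a ∈ A := by
    by_contra haA
    exact hpq ((eq_add_replicate_of_univ_inc hpA hap haA).trans
      (eq_add_replicate_of_univ_inc hqA haq haA).symm)
  exact ⟨hxA.2.1, mem_of_univ_inc hxA haA⟩

variable [Nontrivial α]

theorem isHyperplane_univ (k : ℕ) (a : α) :
    (Ver Finset.univ k).IsHyperplane {f : Multiset α | Multiset.card f = k ∧ a ∈ f} := by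
  refine ⟨isSubspace_univ k a, fun h => ?_, fun e he =>
    ⟨_, add_replicate_mem (mem_univ_lns.1 he) a, univ_inc_add_replicate (mem_univ_lns.1 he) a⟩⟩
  obtain ⟨b, hba⟩ := exists_ne a
  have hb : Multiset.replicate k b ∈ {f : Multiset α | Multiset.card f = k ∧ a ∈ f} :=
    h ▸ mem_univ_pts.2 (Multiset.card_replicate k b)
  exact hba (Multiset.eq_of_mem_replicate hb.2).symm

theorem linesIn_univ (k : ℕ) (a : α) :
    (Ver Finset.univ k).linesIn {f : Multiset α | Multiset.card f = k ∧ a ∈ f} =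
      {e : Multiset α | Multiset.card e < k ∧ a ∈ e} := by
  ext e
  simp only [IncStr.linesIn, Set.mem_ofPred_eq, mem_univ_lns]
  refine ⟨fun ⟨he, hall⟩ => ⟨he, ?_⟩,
    fun ⟨he, hae⟩ => ⟨he, fun f hf => ⟨hf.2.1, mem_of_univ_inc hf hae⟩⟩⟩
  by_contra hae
  obtain ⟨b, hba⟩ := exists_ne a
  have hinc := univ_inc_add_replicate he b
  have hb := eq_add_replicate_of_univ_inc hinc (hall _ hinc).2 hae
  exact hba (Multiset.replicate_right_injective (by omega) (add_left_cancel hb))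

theorem isIso_restrict_univ [DecidableEq α] (n : ℕ) (a : α) :
    IncStr.IsIso (Ver Finset.univ n)
      ((Ver Finset.univ (n + 1)).restrict {f : Multiset α | Multiset.card f = n + 1 ∧ a ∈ f})
      (· + {a}) (· + {a}) := by
  have hpts : (Ver Finset.univ n).pts = {f : Multiset α | Multiset.card f + 1 = n + 1} := by
    ext; simp
  have hlns : (Ver Finset.univ n).lns = {e : Multiset α | Multiset.card e + 1 < n + 1} := by
    ext; simp
  have hpts_bij : Set.BijOn (· + {a}) (Ver Finset.univ n).pts
      {f : Multiset α | Multiset.card f = n + 1 ∧ a ∈ f} :=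
    hpts ▸ Multiset.bijOn_add_singleton a (· = n + 1)
  have hlns_bij : Set.BijOn (· + {a}) (Ver Finset.univ n).lns
      ((Ver Finset.univ (n + 1)).linesIn {f : Multiset α | Multiset.card f = n + 1 ∧ a ∈ f}) :=
    linesIn_univ (n + 1) a ▸ hlns ▸ Multiset.bijOn_add_singleton a (· < n + 1)
  refine ⟨hpts_bij, hlns_bij, fun p hp e he => ?_⟩
  show _ ↔ _ ∧ _ ∧ _
  rw [univ_inc_add_singleton_iff]
  exact ⟨fun h => ⟨h, hpts_bij.mapsTo hp, hlns_bij.mapsTo he⟩, And.left⟩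

end Ver

/-- for `|X| = m ≥ 2`, `k ≥ 2` and `a ∈ X`:
`X₂ = {f ∈ 𝔶_k(X) : a ∈ supp f}` is a hyperplane of `V(X,k)`; the lines all of
whose points lie in `X₂` are `{e ∈ 𝔶_{<k}(X) : a ∈ supp e}`; for every line `e`
with `a ∉ supp e` the unique point of `X₂` incident with `e` is `e·a^{k-|e|}`;
and `f ↦ f·a` is an isomorphism of `V(X,k-1)` onto `V(X,k)↾X₂`. -/
theorem statement14 {α : Type*} [Fintype α] [DecidableEq α] (m k : ℕ)
    (hm : 2 ≤ m) (hk : 2 ≤ k) (hcard : Fintype.card α = m) (a : α) :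
    (Ver (Finset.univ : Finset α) k).IsHyperplane
      {f : Multiset α | Multiset.card f = k ∧ a ∈ f} ∧
    (Ver (Finset.univ : Finset α) k).linesIn
        {f : Multiset α | Multiset.card f = k ∧ a ∈ f}
      = {e : Multiset α | Multiset.card e < k ∧ a ∈ e} ∧
    (∀ e : Multiset α, Multiset.card e < k → a ∉ e →
      (Ver (Finset.univ : Finset α) k).inc
          (e + Multiset.replicate (k - Multiset.card e) a) e ∧
      (e + Multiset.replicate (k - Multiset.card e) a)
          ∈ {f : Multiset α | Multiset.card f = k ∧ a ∈ f} ∧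
      ∀ p ∈ {f : Multiset α | Multiset.card f = k ∧ a ∈ f},
        (Ver (Finset.univ : Finset α) k).inc p e →
          p = e + Multiset.replicate (k - Multiset.card e) a) ∧
    IncStr.IsIso (Ver (Finset.univ : Finset α) (k - 1))
      ((Ver (Finset.univ : Finset α) k).restrict
        {f : Multiset α | Multiset.card f = k ∧ a ∈ f})
      (fun f => f + {a}) (fun e => e + {a}) := by
  have : Nontrivial α := Fintype.one_lt_card_iff_nontrivial.1 (by omega)
  obtain ⟨n, rfl⟩ : ∃ n, k = n + 1 := ⟨k - 1, by omega⟩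
  refine ⟨Ver.isHyperplane_univ _ a, Ver.linesIn_univ _ a, fun e he hae => ?_, ?_⟩
  · exact ⟨Ver.univ_inc_add_replicate he a, Ver.add_replicate_mem he a,
      fun p hp hinc => Ver.eq_add_replicate_of_univ_inc hinc hp.2 hae⟩
  · simpa using Ver.isIso_restrict_univ n a
end

section
/- Let X be a finite set with |X| = m ≥ 3, let k ≥ 2, and fix a ∈ X. Then the combinatorial Veronesian V(X,k) is isomorphic to V(X∖{a}, k) ⋊_∞ V(X, k−1), where ∞ maps each line e ∈ 𝔶_{<k}(X∖{a}) of V(X∖{a}, k) to the point e·a^{k−1−|e|} ∈ 𝔶_{k−1}(X) of V(X, k−1). -/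
/-!
Removing one copy of `a` from the multisets that contain it identifies the points and lines
of `V(X,k)` through `a` with those of `V(X,k-1)` (the exponent drops by one on both sides, so
`f = e·x^{k-|e|}` survives), and the multisets avoiding `a` with `V(X∖{a},k)`. A multiset
`e·x^{k-|e|}` contains `a` iff `a ∈ e` or `x = a`; so a line `e ∌ a` meets the points through
`a` only in `e·a^{k-|e|}`, which is sent to `∞(e) = e·a^{k-1-|e|}`, and a line through `a` meets
only points through `a`.
-/

namespace Ver

open Multiset

variable {α : Type*} {Y : Finset α} {k : ℕ} {a : α} {f e : Multiset α}

lemma not_inc_of_notMem_of_mem (hf : a ∉ f) (he : a ∈ e) : ¬ (Ver Y k).inc f e := by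
  rintro ⟨-, -, -, -, x, -, rfl⟩
  exact hf (mem_add.mpr (Or.inl he))

lemma cons_inc_iff_of_notMem (hf : a ::ₘ f ∈ (Ver Y k).pts) (he : e ∈ (Ver Y k).lns)
    (hae : a ∉ e) : (Ver Y k).inc (a ::ₘ f) e ↔ f = e + replicate (k - 1 - card e) a := by
  have hsucc : k - card e = k - 1 - card e + 1 := by have := he.2; omega
  constructor
  · rintro ⟨-, -, -, -, x, -, hfx⟩
    rw [hsucc, replicate_succ, add_cons] at hfx
    obtain rfl : x = a := by
      have : a ∈ x ::ₘ (e + replicate (k - 1 - card e) x) := hfx ▸ mem_cons_self a f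
      rcases mem_cons.mp this with rfl | h
      · rfl
      · exact (eq_of_mem_replicate ((mem_add.mp h).resolve_left hae)).symm
    exact (cons_inj_right x).mp hfx
  · intro hfe
    exact ⟨hf.1, hf.2, he.1, he.2, a, hf.1 a (mem_cons_self a f),
      by rw [hsucc, replicate_succ, add_cons, hfe]⟩

lemma cons_inc_cons_iff (ha : a ∈ Y) :
    (Ver Y k).inc (a ::ₘ f) (a ::ₘ e) ↔ (Ver Y (k - 1)).inc f e := by
  simp only [Ver, forall_mem_cons, ha, true_and, card_cons, cons_add, cons_inj_right]
  constructor
  · rintro ⟨hfY, hfk, heY, hek, hx⟩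
    exact ⟨hfY, by omega, heY, by omega, by simpa [Nat.sub_sub, add_comm] using hx⟩
  · rintro ⟨hfY, hfk, heY, hek, hx⟩
    exact ⟨hfY, by omega, heY, by omega, by simpa [Nat.sub_sub, add_comm] using hx⟩

variable [DecidableEq α]

/-- Removes one copy of `a` from `f` if there is one, recording in the tag whether it did;
this is the isomorphism on points and on lines alike. -/
def splitOff (a : α) (f : Multiset α) : Multiset α × Bool :=
  if a ∈ f then (f.erase a, true) else (f, false)

def unsplit (a : α) (p : Multiset α × Bool) : Multiset α :=
  if p.2 then a ::ₘ p.1 else p.1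

@[simp]
lemma splitOff_cons (a : α) (f : Multiset α) : splitOff a (a ::ₘ f) = (f, true) := by
  simp [splitOff]

@[simp]
lemma splitOff_of_notMem (h : a ∉ f) : splitOff a f = (f, false) := by
  simp [splitOff, h]

lemma unsplit_splitOff (a : α) (f : Multiset α) : unsplit a (splitOff a f) = f := by
  by_cases h : a ∈ f
  · obtain ⟨f', rfl⟩ := exists_cons_of_mem h
    simp [unsplit]
  · simp [unsplit, h]

lemma bijOn_splitOff (ha : a ∈ Y) {Q Q' : ℕ → Prop}
    (hQ : ∀ n, Q (n + 1) ↔ Q' n) :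
    Set.BijOn (splitOff a) {f | (∀ x ∈ f, x ∈ Y) ∧ Q (card f)}
      ((fun f => (f, false)) '' {f | (∀ x ∈ f, x ∈ Y.erase a) ∧ Q (card f)} ∪
        (fun f => (f, true)) '' {f | (∀ x ∈ f, x ∈ Y) ∧ Q' (card f)}) := by
  refine Set.InvOn.bijOn (f' := unsplit a) ⟨fun f _ => unsplit_splitOff a f, ?_⟩ ?_ ?_
  · rintro _ (⟨f, ⟨hfY, -⟩, rfl⟩ | ⟨f, -, rfl⟩)
    · have : a ∉ f := fun h => (Finset.mem_erase.mp (hfY a h)).1 rfl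
      simp [unsplit, this]
    · simp [unsplit]
  · rintro f ⟨hfY, hQf⟩
    by_cases h : a ∈ f
    · obtain ⟨f, rfl⟩ := exists_cons_of_mem h
      refine Or.inr ⟨f, ⟨fun x hx => hfY x (mem_cons_of_mem hx), ?_⟩, (splitOff_cons a f).symm⟩
      rwa [← hQ, ← card_cons a]
    · refine Or.inl ⟨f, ⟨fun x hx => Finset.mem_erase.mpr ⟨?_, hfY x hx⟩, hQf⟩,
        (splitOff_of_notMem h).symm⟩
      rintro rfl
      exact h hx
  · rintro _ (⟨f, ⟨hfY, hQf⟩, rfl⟩ | ⟨f, ⟨hfY, hQf⟩, rfl⟩)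
    · exact ⟨fun x hx => Finset.mem_of_mem_erase (hfY x hx), hQf⟩
    · refine ⟨fun x hx => ?_, by simpa [unsplit, hQ] using hQf⟩
      rcases mem_cons.mp hx with rfl | hx
      exacts [ha, hfY x hx]

lemma forall_mem_erase_iff_of_notMem (hf : a ∉ f) :
    (∀ x ∈ f, x ∈ Y.erase a) ↔ ∀ x ∈ f, x ∈ Y :=
  ⟨fun h x hx => Finset.mem_of_mem_erase (h x hx),
    fun h x hx => Finset.mem_erase.mpr ⟨fun hxa => hf (hxa ▸ hx), h x hx⟩⟩

lemma inc_erase_iff (hf : a ∉ f) (he : a ∉ e) :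
    (Ver (Y.erase a) k).inc f e ↔ (Ver Y k).inc f e := by
  simp only [Ver]
  rw [forall_mem_erase_iff_of_notMem hf, forall_mem_erase_iff_of_notMem he]
  refine and_congr_right fun _ => and_congr_right fun _ => and_congr_right fun _ =>
    and_congr_right fun hek => ⟨fun ⟨x, hx, hfx⟩ => ⟨x, Finset.mem_of_mem_erase hx, hfx⟩, ?_⟩
  rintro ⟨x, hx, rfl⟩
  refine ⟨x, Finset.mem_erase.mpr ⟨?_, hx⟩, rfl⟩
  rintro rfl
  exact hf (mem_add.mpr (Or.inr (mem_replicate.mpr ⟨by omega, rfl⟩)))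

def splitJoin (Y : Finset α) (a : α) (k : ℕ) : IncStr (Multiset α × Bool) (Multiset α × Bool) :=
  IncStr.join (IncStr.tag (Ver (Y.erase a) k) false) (IncStr.tag (Ver Y (k - 1)) true)
    (fun e => (e.1 + replicate (k - 1 - card e.1) a, true))

lemma inc_iff_splitJoin_inc (ha : a ∈ Y) (hf : f ∈ (Ver Y k).pts) (he : e ∈ (Ver Y k).lns) :
    (Ver Y k).inc f e ↔ (splitJoin Y a k).inc (splitOff a f) (splitOff a e) := by
  by_cases haf : a ∈ f <;> by_cases hae : a ∈ e
  · obtain ⟨f, rfl⟩ := exists_cons_of_mem haf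
    obtain ⟨e, rfl⟩ := exists_cons_of_mem hae
    simp [splitJoin, IncStr.join, IncStr.tag, cons_inc_cons_iff ha]
  · obtain ⟨f, rfl⟩ := exists_cons_of_mem haf
    have he' : e ∈ (Ver (Y.erase a) k).lns :=
      ⟨(forall_mem_erase_iff_of_notMem hae).mpr he.1, he.2⟩
    simp [splitJoin, IncStr.join, IncStr.tag, hae, he', cons_inc_iff_of_notMem hf he hae]
  · obtain ⟨e, rfl⟩ := exists_cons_of_mem hae
    simp [splitJoin, IncStr.join, IncStr.tag, haf, not_inc_of_notMem_of_mem haf hae]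
  · simp [splitJoin, IncStr.join, IncStr.tag, haf, hae, inc_erase_iff haf hae]

theorem isIso_splitOff (ha : a ∈ Y) (hk : 1 ≤ k) :
    IncStr.IsIso (Ver Y k) (splitJoin Y a k) (splitOff a) (splitOff a) :=
  ⟨bijOn_splitOff ha (Q := (· = k)) (Q' := (· = k - 1)) fun n => by omega,
    bijOn_splitOff ha (Q := (· < k)) (Q' := (· < k - 1)) fun n => by omega,
    fun _ hf _ he => inc_iff_splitJoin_inc ha hf he⟩

end Ver

theorem statement15_general {α : Type*} [Fintype α] [DecidableEq α] (k : ℕ)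
    (hk : 2 ≤ k) (a : α) :
    IncStr.Isomorphic (Ver (Finset.univ : Finset α) k)
      (IncStr.join (IncStr.tag (Ver (Finset.univ.erase a) k) false)
        (IncStr.tag (Ver (Finset.univ : Finset α) (k - 1)) true)
        (fun e => (e.1 + Multiset.replicate (k - 1 - Multiset.card e.1) a, true))) :=
  ⟨_, _, Ver.isIso_splitOff (Finset.mem_univ a) (by omega)⟩

/-- for `|X| = m ≥ 3`, `k ≥ 2` and `a ∈ X`,
`V(X,k) ≅ V(X∖{a}, k) ⋊_∞ V(X, k-1)`, where `∞` maps each line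
`e ∈ 𝔶_{<k}(X∖{a})` of `V(X∖{a}, k)` to the point `e·a^{k-1-|e|} ∈ 𝔶_{k-1}(X)`
of `V(X, k-1)` (the two summands are taken as formally disjoint tagged copies). -/
theorem statement15 {α : Type*} [Fintype α] [DecidableEq α] (m k : ℕ)
    (hm : 3 ≤ m) (hk : 2 ≤ k) (hcard : Fintype.card α = m) (a : α) :
    IncStr.Isomorphic (Ver (Finset.univ : Finset α) k)
      (IncStr.join (IncStr.tag (Ver (Finset.univ.erase a) k) false)
        (IncStr.tag (Ver (Finset.univ : Finset α) (k - 1)) true)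
        (fun e => (e.1 + Multiset.replicate (k - 1 - Multiset.card e.1) a, true))) :=
  statement15_general k hk a
end

section
/- Let X be a finite set with |X| = n and let 1 ≤ k ≤ n − 2. Then the dual of the combinatorial Grassmannian G(X,k) is isomorphic to the combinatorial Grassmannian G(X, n−k−1); an isomorphism is induced by set-theoretic complementation in X, sending a point A ∈ ℘_{k+1}(X) of G(X,k)° to X∖A ∈ ℘_{n−k−1}(X) and a line a ∈ ℘_k(X) of G(X,k)° to X∖a ∈ ℘_{n−k}(X). -/
namespace Gras

variable {α : Type*}

theorem inc_iff_ssubset {Y a A : Finset α} {k : ℕ} (ha : a ∈ (Gras Y k).pts)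
    (hA : A ∈ (Gras Y k).lns) : (Gras Y k).inc a A ↔ a ⊂ A :=
  ⟨fun h => h.2.2.2.2, fun h => ⟨ha.1, ha.2, hA.1, hA.2, h⟩⟩

theorem bijOn_compl_pts [Fintype α] [DecidableEq α] {j m : ℕ}
    (h : j + m = Fintype.card α) :
    Set.BijOn compl (Gras (Finset.univ : Finset α) j).pts (Gras Finset.univ m).pts := by
  refine ⟨fun a ha => ⟨Finset.subset_univ _, ?_⟩, compl_injective.injOn, fun b hb => ?_⟩
  · rw [Finset.card_compl, ha.2]; omega
  · refine ⟨bᶜ, ⟨Finset.subset_univ _, ?_⟩, compl_compl b⟩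
    rw [Finset.card_compl, hb.2]; omega

end Gras

/-- for `|X| = n` and `1 ≤ k ≤ n - 2`, set-theoretic complementation
in `X` (on points `A ∈ ℘_{k+1}(X)` of `G(X,k)°` and on lines `a ∈ ℘_k(X)` of
`G(X,k)°`) is an isomorphism of `G(X,k)°` onto `G(X, n-k-1)`. -/
theorem statement16 {α : Type*} [Fintype α] [DecidableEq α] (n k : ℕ)
    (hn : Fintype.card α = n) (hk1 : 1 ≤ k) (hk2 : k ≤ n - 2) :
    IncStr.IsIso (Gras (Finset.univ : Finset α) k).dual
      (Gras (Finset.univ : Finset α) (n - k - 1))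
      (fun A => Aᶜ) (fun a => aᶜ) := by
  subst hn
  -- The lines of `G(X, i)` are, definitionally, the points of `G(X, i + 1)`.
  have hpts := Gras.bijOn_compl_pts (α := α) (j := k + 1) (m := Fintype.card α - k - 1)
    (by omega)
  have hlns := Gras.bijOn_compl_pts (α := α) (j := k) (m := Fintype.card α - k - 1 + 1)
    (by omega)
  refine ⟨hpts, hlns, fun A hA a ha => ?_⟩
  change (Gras _ k).inc a A ↔ _
  rw [Gras.inc_iff_ssubset ha hA, Gras.inc_iff_ssubset (hpts.mapsTo hA) (hlns.mapsTo ha),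
    Finset.compl_ssubset_compl]
end

section
/- Let X be a finite set with |X| = m ≥ 3, let k ≥ 2, and fix a ∈ X. Let X₂ = {f ∈ 𝔶_k(X) : a ∈ supp(f)}, X₁ = 𝔶_k(X∖{a}), L₂ = {e ∈ 𝔶_{<k}(X) : a ∈ supp(e)}, and L₁ = 𝔶_{<k}(X∖{a}). Then the dual Veronesian V(X,k)° equals ⟨L₂, X₂, I⁻¹⟩ ⋊_∞ ⟨L₁, X₁, I⁻¹⟩, where for each f ∈ X₂ (a line of ⟨L₂, X₂, I⁻¹⟩) one sets ∞(f) = f / a^{dg(a,f)} ∈ L₁, with dg(a,f) the multiplicity of a in f; moreover ⟨L₂, X₂, I⁻¹⟩ is isomorphic to V(X, k−1)° and ⟨L₁, X₁, I⁻¹⟩ is isomorphic to V(X∖{a}, k)°, so V(X,k)° ≅ V(X,k−1)° ⋊_∞ V(X∖{a},k)°. -/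
/-- The structure `⟨L₂, X₂, I⁻¹⟩`: points are the lines of `V(X,k)` containing `a`,
lines are the points of `V(X,k)` containing `a`, with the (restricted) inverse
incidence of `V(X,k)`. -/
def dualVerPart2 (α : Type*) [Fintype α] [DecidableEq α] (k : ℕ) (a : α) :
    IncStr (Multiset α) (Multiset α) where
  pts := {e : Multiset α | Multiset.card e < k ∧ a ∈ e}
  lns := {f : Multiset α | Multiset.card f = k ∧ a ∈ f}
  inc := fun e f => (Ver (Finset.univ : Finset α) k).inc f e ∧
    (Multiset.card e < k ∧ a ∈ e) ∧ (Multiset.card f = k ∧ a ∈ f)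

/-- The structure `⟨L₁, X₁, I⁻¹⟩`: points are the lines of `V(X,k)` avoiding `a`,
lines are the points of `V(X,k)` avoiding `a`, with the (restricted) inverse
incidence of `V(X,k)`. -/
def dualVerPart1 (α : Type*) [Fintype α] [DecidableEq α] (k : ℕ) (a : α) :
    IncStr (Multiset α) (Multiset α) where
  pts := {e : Multiset α | Multiset.card e < k ∧ a ∉ e}
  lns := {f : Multiset α | Multiset.card f = k ∧ a ∉ f}
  inc := fun e f => (Ver (Finset.univ : Finset α) k).inc f e ∧
    (Multiset.card e < k ∧ a ∉ e) ∧ (Multiset.card f = k ∧ a ∉ f)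

theorem Set.BijOn.piecewise_union {α β : Type*} {s₁ s₂ : Set α} {t₁ t₂ : Set β}
    {f₁ f₂ : α → β} [∀ x, Decidable (x ∈ s₁)] (h₁ : BijOn f₁ s₁ t₁) (h₂ : BijOn f₂ s₂ t₂)
    (hs : Disjoint s₁ s₂) (ht : Disjoint t₁ t₂) :
    BijOn (s₁.piecewise f₁ f₂) (s₁ ∪ s₂) (t₁ ∪ t₂) := by
  have e₁ : EqOn f₁ (s₁.piecewise f₁ f₂) s₁ := (piecewise_eqOn s₁ f₁ f₂).symm
  have e₂ : EqOn f₂ (s₁.piecewise f₁ f₂) s₂ :=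
    fun x hx => (piecewise_eq_of_notMem _ _ _ (disjoint_right.1 hs hx)).symm
  have h₁' := h₁.congr e₁
  have h₂' := h₂.congr e₂
  refine h₁'.union h₂' ((injOn_union hs).2 ⟨h₁'.injOn, h₂'.injOn, ?_⟩)
  intro x hx y hy hxy
  exact disjoint_left.1 ht (h₁'.mapsTo hx) (hxy ▸ h₂'.mapsTo hy)

namespace IncStr

variable {P L P' L' P'' L'' : Type*}

@[ext]
theorem ext {K K' : IncStr P L} (hpts : K.pts = K'.pts) (hlns : K.lns = K'.lns)
    (hinc : K.inc = K'.inc) : K = K' := by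
  cases K; cases K'; cases hpts; cases hlns; cases hinc; rfl

theorem Proper.dual {K : IncStr P L} (h : K.Proper) : K.dual.Proper :=
  fun l p hlp => (h p l hlp).symm

theorem proper_tag {K : IncStr P L} (h : K.Proper) (b : Bool) : (K.tag b).Proper := by
  rintro ⟨p, _⟩ ⟨l, _⟩ ⟨hpl, rfl, rfl⟩
  exact ⟨⟨p, (h p l hpl).1, rfl⟩, ⟨l, (h p l hpl).2, rfl⟩⟩

theorem disjoint_tag_pts (K₁ K₂ : IncStr P L) {b₁ b₂ : Bool} (hb : b₁ ≠ b₂) :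
    Disjoint (K₁.tag b₁).pts (K₂.tag b₂).pts := by
  rw [Set.disjoint_left]
  rintro _ ⟨p, -, rfl⟩ ⟨q, -, hq⟩
  exact hb (congrArg Prod.snd hq).symm

theorem disjoint_tag_lns (K₁ K₂ : IncStr P L) {b₁ b₂ : Bool} (hb : b₁ ≠ b₂) :
    Disjoint (K₁.tag b₁).lns (K₂.tag b₂).lns := by
  rw [Set.disjoint_left]
  rintro _ ⟨l, -, rfl⟩ ⟨m, -, hm⟩
  exact hb (congrArg Prod.snd hm).symm

theorem isIso_id (K : IncStr P L) : IsIso K K id id :=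
  ⟨Set.bijOn_id _, Set.bijOn_id _, fun _ _ _ _ => Iff.rfl⟩

theorem isIso_tag (K : IncStr P L) (b : Bool) :
    IsIso K (K.tag b) (fun p => (p, b)) (fun l => (l, b)) :=
  ⟨(Prod.mk_left_injective b).injOn.bijOn_image,
    (Prod.mk_left_injective b).injOn.bijOn_image,
    fun _ _ _ _ => ⟨fun h => ⟨h, rfl, rfl⟩, And.left⟩⟩

theorem IsIso.trans {K : IncStr P L} {K' : IncStr P' L'} {K'' : IncStr P'' L''}
    {φ : P → P'} {ψ : L → L'} {φ' : P' → P''} {ψ' : L' → L''}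
    (h : IsIso K K' φ ψ) (h' : IsIso K' K'' φ' ψ') : IsIso K K'' (φ' ∘ φ) (ψ' ∘ ψ) :=
  ⟨h'.1.comp h.1, h'.2.1.comp h.2.1, fun p hp l hl =>
    (h.2.2 p hp l hl).trans (h'.2.2 _ (h.1.mapsTo hp) _ (h.2.1.mapsTo hl))⟩

section join

variable {K₁ K₂ : IncStr P L} {f : L → P} {p : P} {l : L}

theorem join_inc_iff_left_left (h₂ : K₂.Proper) (hpts : Disjoint K₁.pts K₂.pts)
    (hp : p ∈ K₁.pts) (hfl : f l ∉ K₁.pts) : (join K₁ K₂ f).inc p l ↔ K₁.inc p l := by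
  refine ⟨?_, Or.inl⟩
  rintro (h | h | ⟨-, rfl⟩)
  · exact h
  · exact absurd (h₂ _ _ h).1 (Set.disjoint_left.1 hpts hp)
  · exact absurd hp hfl

theorem join_inc_iff_right_left (h₁ : K₁.Proper) (h₂ : K₂.Proper)
    (hpts : Disjoint K₁.pts K₂.pts) (hlns : Disjoint K₁.lns K₂.lns)
    (hp : p ∈ K₂.pts) (hl : l ∈ K₁.lns) : (join K₁ K₂ f).inc p l ↔ p = f l := by
  refine ⟨?_, fun h => Or.inr (Or.inr ⟨hl, h⟩)⟩
  rintro (h | h | ⟨-, h⟩)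
  · exact absurd hp (Set.disjoint_left.1 hpts (h₁ _ _ h).1)
  · exact absurd (h₂ _ _ h).2 (Set.disjoint_left.1 hlns hl)
  · exact h

theorem not_join_inc_left_right (h₁ : K₁.Proper) (h₂ : K₂.Proper)
    (hpts : Disjoint K₁.pts K₂.pts) (hlns : Disjoint K₁.lns K₂.lns)
    (hp : p ∈ K₁.pts) (hl : l ∈ K₂.lns) : ¬ (join K₁ K₂ f).inc p l := by
  rintro (h | h | ⟨h, -⟩)
  · exact Set.disjoint_left.1 hlns (h₁ _ _ h).2 hl
  · exact Set.disjoint_left.1 hpts hp (h₂ _ _ h).1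
  · exact Set.disjoint_left.1 hlns h hl

theorem join_inc_iff_right_right (h₁ : K₁.Proper) (hlns : Disjoint K₁.lns K₂.lns)
    (hl : l ∈ K₂.lns) : (join K₁ K₂ f).inc p l ↔ K₂.inc p l := by
  refine ⟨?_, fun h => Or.inr (Or.inl h)⟩
  rintro (h | h | ⟨h, -⟩)
  · exact absurd hl (Set.disjoint_left.1 hlns (h₁ _ _ h).2)
  · exact h
  · exact absurd hl (Set.disjoint_left.1 hlns h)

end join

theorem IsIso.join {K₁ K₂ : IncStr P L} {K₁' K₂' : IncStr P' L'} {f : L → P} {f' : L' → P'}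
    {φ₁ φ₂ : P → P'} {ψ₁ ψ₂ : L → L'} (iso₁ : IsIso K₁ K₁' φ₁ ψ₁) (iso₂ : IsIso K₂ K₂' φ₂ ψ₂)
    (h₁ : K₁.Proper) (h₂ : K₂.Proper) (h₁' : K₁'.Proper) (h₂' : K₂'.Proper)
    (hpts : Disjoint K₁.pts K₂.pts) (hlns : Disjoint K₁.lns K₂.lns)
    (hpts' : Disjoint K₁'.pts K₂'.pts) (hlns' : Disjoint K₁'.lns K₂'.lns)
    (hf : Set.MapsTo f K₁.lns K₂.pts) (hff' : ∀ l ∈ K₁.lns, f' (ψ₁ l) = φ₂ (f l)) :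
    Isomorphic (join K₁ K₂ f) (join K₁' K₂' f') := by
  classical
  refine ⟨K₁.pts.piecewise φ₁ φ₂, K₁.lns.piecewise ψ₁ ψ₂,
    iso₁.1.piecewise_union iso₂.1 hpts hpts', iso₁.2.1.piecewise_union iso₂.2.1 hlns hlns', ?_⟩
  have outside : ∀ l ∈ K₁.lns, f l ∉ K₁.pts := fun l hl => Set.disjoint_right.1 hpts (hf hl)
  have outside' : ∀ l ∈ K₁.lns, f' (ψ₁ l) ∉ K₁'.pts := fun l hl => by
    rw [hff' l hl]; exact Set.disjoint_right.1 hpts' (iso₂.1.mapsTo (hf hl))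
  rintro p (hp | hp) l (hl | hl)
  · rw [Set.piecewise_eq_of_mem _ _ _ hp, Set.piecewise_eq_of_mem _ _ _ hl,
      join_inc_iff_left_left h₂ hpts hp (outside l hl),
      join_inc_iff_left_left h₂' hpts' (iso₁.1.mapsTo hp) (outside' l hl)]
    exact iso₁.2.2 p hp l hl
  · rw [Set.piecewise_eq_of_mem _ _ _ hp, Set.piecewise_eq_of_notMem _ _ _
      (Set.disjoint_right.1 hlns hl)]
    exact iff_of_false (not_join_inc_left_right h₁ h₂ hpts hlns hp hl)
      (not_join_inc_left_right h₁' h₂' hpts' hlns' (iso₁.1.mapsTo hp) (iso₂.2.1.mapsTo hl))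
  · rw [Set.piecewise_eq_of_notMem _ _ _ (Set.disjoint_right.1 hpts hp),
      Set.piecewise_eq_of_mem _ _ _ hl,
      join_inc_iff_right_left h₁ h₂ hpts hlns hp hl,
      join_inc_iff_right_left h₁' h₂' hpts' hlns' (iso₂.1.mapsTo hp) (iso₁.2.1.mapsTo hl),
      hff' l hl]
    exact (iso₂.1.injOn.eq_iff hp (hf hl)).symm
  · rw [Set.piecewise_eq_of_notMem _ _ _ (Set.disjoint_right.1 hpts hp),
      Set.piecewise_eq_of_notMem _ _ _ (Set.disjoint_right.1 hlns hl),
      join_inc_iff_right_right h₁ hlns hl,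
      join_inc_iff_right_right h₁' hlns' (iso₂.2.1.mapsTo hl)]
    exact iso₂.2.2 p hp l hl

end IncStr

namespace Multiset

variable {α : Type*} {a : α}

theorem forall_mem_ne_iff {s : Multiset α} : (∀ x ∈ s, x ≠ a) ↔ a ∉ s :=
  ⟨fun h ha => h a ha rfl, fun h _ hx hxa => h (hxa ▸ hx)⟩

variable [DecidableEq α]

theorem filter_ne_add_replicate {e : Multiset α} (he : a ∉ e) (n : ℕ) :
    (e + replicate n a).filter (· ≠ a) = e := by
  rw [filter_add, filter_eq_self.2 fun x hx => ne_of_mem_of_not_mem hx he,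
    filter_eq_nil.2 fun x hx h => h (eq_of_mem_replicate hx), add_zero]

theorem filter_ne_add_replicate_count (a : α) (f : Multiset α) :
    f.filter (· ≠ a) + replicate (f.count a) a = f := by
  simpa [filter_eq'] using filter_add_not (· ≠ a) f

theorem card_filter_ne_add_count (a : α) (f : Multiset α) :
    card (f.filter (· ≠ a)) + f.count a = card f := by
  simpa using congrArg card (filter_ne_add_replicate_count a f)

theorem filter_ne_erase (a : α) (f : Multiset α) :
    (f.erase a).filter (· ≠ a) = f.filter (· ≠ a) := by
  by_cases ha : a ∈ f
  · conv_rhs => rw [← cons_erase ha]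
    rw [filter_cons_of_neg _ fun h => h rfl]
  · rw [erase_of_notMem ha]

theorem bijOn_erase {S T : Set (Multiset α)} (hS : ∀ s ∈ S, a ∈ s ∧ s.erase a ∈ T)
    (hT : ∀ t ∈ T, a ::ₘ t ∈ S) : Set.BijOn (·.erase a) S T :=
  Set.InvOn.bijOn ⟨fun s hs => cons_erase (hS s hs).1, fun t _ => erase_cons_head a t⟩
    (fun s hs => (hS s hs).2) hT

end Multiset

open Multiset

section Veronesian

variable {α : Type*}

theorem Ver.proper (Y : Finset α) (k : ℕ) : (Ver Y k).Proper :=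
  fun _ _ h => ⟨⟨h.1, h.2.1⟩, h.2.2.1, h.2.2.2.1⟩

theorem Ver.mem_of_inc {Y : Finset α} {k : ℕ} {f e : Multiset α} {a : α}
    (h : (Ver Y k).inc f e) (ha : a ∈ e) : a ∈ f := by
  obtain ⟨x, -, rfl⟩ := h.2.2.2.2
  exact mem_add.2 (Or.inl ha)

variable [Fintype α]

theorem Ver.inc_univ_iff {k : ℕ} {f e : Multiset α} :
    (Ver Finset.univ k).inc f e ↔
      card f = k ∧ card e < k ∧ ∃ x, f = e + replicate (k - card e) x := by
  simp [Ver]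

theorem Ver.inc_univ_cons_cons {k : ℕ} {f e : Multiset α} (a : α) :
    (Ver Finset.univ (k + 1)).inc (a ::ₘ f) (a ::ₘ e) ↔ (Ver Finset.univ k).inc f e := by
  simp [Ver.inc_univ_iff, cons_add]

theorem Ver.inc_univ_iff_eq_filter [DecidableEq α] {k : ℕ} {f e : Multiset α} {a : α}
    (hf : a ∈ f) (he : a ∉ e) :
    (Ver Finset.univ k).inc f e ↔ card f = k ∧ e = f.filter (· ≠ a) := by
  rw [Ver.inc_univ_iff]
  constructor
  · rintro ⟨hfk, -, x, rfl⟩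
    have hx : x = a := by
      rcases mem_add.1 hf with h | h
      · exact absurd h he
      · exact (eq_of_mem_replicate h).symm
    exact ⟨hfk, by rw [hx, filter_ne_add_replicate he]⟩
  · rintro ⟨rfl, rfl⟩
    have hcard := card_filter_ne_add_count a f
    have hcount := count_pos.2 hf
    refine ⟨rfl, by omega, a, ?_⟩
    rw [show card f - card (f.filter (· ≠ a)) = f.count a by omega,
      filter_ne_add_replicate_count]

end Veronesian

section SplitAtPoint

variable {α : Type*} [Fintype α] [DecidableEq α] (k : ℕ) (a : α)

theorem dualVerPart2_proper : (dualVerPart2 α k a).Proper :=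
  fun _ _ h => ⟨h.2.1, h.2.2⟩

theorem dualVerPart1_proper : (dualVerPart1 α k a).Proper :=
  fun _ _ h => ⟨h.2.1, h.2.2⟩

theorem disjoint_dualVerPart_pts : Disjoint (dualVerPart2 α k a).pts (dualVerPart1 α k a).pts :=
  Set.disjoint_left.2 fun _ h₂ h₁ => h₁.2 h₂.2

theorem disjoint_dualVerPart_lns : Disjoint (dualVerPart2 α k a).lns (dualVerPart1 α k a).lns :=
  Set.disjoint_left.2 fun _ h₂ h₁ => h₁.2 h₂.2

theorem mapsTo_filter_ne_dualVerPart :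
    Set.MapsTo (filter (· ≠ a)) (dualVerPart2 α k a).lns (dualVerPart1 α k a).pts := by
  rintro f ⟨rfl, ha⟩
  refine ⟨?_, fun h => (mem_filter.1 h).2 rfl⟩
  have := card_filter_ne_add_count a f
  have := count_pos.2 ha
  omega

theorem ver_univ_inc_iff_dualVerPart (e f : Multiset α) :
    (Ver (Finset.univ : Finset α) k).inc f e ↔
      (dualVerPart2 α k a).inc e f ∨ (dualVerPart1 α k a).inc e f ∨
        (f ∈ (dualVerPart2 α k a).lns ∧ e = filter (· ≠ a) f) := by
  simp only [dualVerPart2, dualVerPart1]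
  by_cases he : a ∈ e
  · have hne : e ≠ filter (· ≠ a) f := by rintro rfl; exact (mem_filter.1 he).2 rfl
    constructor
    · intro h
      obtain ⟨⟨-, hf⟩, -, he'⟩ := Ver.proper _ _ f e h
      exact Or.inl ⟨h, ⟨he', he⟩, hf, Ver.mem_of_inc h he⟩
    · rintro (⟨h, -⟩ | ⟨-, ⟨-, he'⟩, -⟩ | ⟨-, h⟩)
      exacts [h, absurd he he', absurd h hne]
  · by_cases hf : a ∈ f
    · rw [Ver.inc_univ_iff_eq_filter hf he]
      constructor
      · rintro ⟨hk, rfl⟩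
        exact Or.inr (Or.inr ⟨⟨hk, hf⟩, rfl⟩)
      · rintro (⟨-, ⟨-, h⟩, -⟩ | ⟨-, -, -, h⟩ | ⟨⟨hk, -⟩, h⟩)
        exacts [absurd h he, absurd hf h, ⟨hk, h⟩]
    · constructor
      · intro h
        obtain ⟨⟨-, hf'⟩, -, he'⟩ := Ver.proper _ _ f e h
        exact Or.inr (Or.inl ⟨h, ⟨he', he⟩, hf', hf⟩)
      · rintro (⟨-, ⟨-, h⟩, -⟩ | ⟨h, -⟩ | ⟨⟨-, h⟩, -⟩)
        exacts [absurd h he, h, absurd h hf]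

theorem dual_ver_univ_eq_join :
    (Ver (Finset.univ : Finset α) k).dual =
      IncStr.join (dualVerPart2 α k a) (dualVerPart1 α k a) (filter (· ≠ a)) := by
  ext e f
  · simp only [IncStr.dual, IncStr.join, Ver, dualVerPart2, dualVerPart1, Set.mem_ofPred_eq,
      Set.mem_union, Finset.mem_univ, implies_true, true_and]
    tauto
  · simp only [IncStr.dual, IncStr.join, Ver, dualVerPart2, dualVerPart1, Set.mem_ofPred_eq,
      Set.mem_union, Finset.mem_univ, implies_true, true_and]
    tauto
  · exact ver_univ_inc_iff_dualVerPart k a e f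

theorem isIso_dualVerPart2 (hk : 1 ≤ k) :
    IncStr.IsIso (dualVerPart2 α k a) (Ver (Finset.univ : Finset α) (k - 1)).dual
      (·.erase a) (·.erase a) := by
  obtain ⟨k, rfl⟩ : ∃ j, k = j + 1 := ⟨k - 1, by omega⟩
  refine ⟨bijOn_erase ?_ ?_, bijOn_erase ?_ ?_, ?_⟩
  · rintro e ⟨he_card, he⟩
    have := card_erase_add_one he
    exact ⟨he, by simp, by omega⟩
  · rintro e ⟨-, he_card⟩
    exact ⟨by simpa using he_card, mem_cons_self a e⟩
  · rintro f ⟨hf_card, hf⟩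
    have := card_erase_add_one hf
    exact ⟨hf, by simp, by omega⟩
  · rintro f ⟨-, hf_card⟩
    exact ⟨by simpa using hf_card, mem_cons_self a f⟩
  · intro e he f hf
    obtain ⟨e, rfl⟩ := exists_cons_of_mem he.2
    obtain ⟨f, rfl⟩ := exists_cons_of_mem hf.2
    simp only [dualVerPart2, IncStr.dual, erase_cons_head, Nat.add_sub_cancel,
      Ver.inc_univ_cons_cons]
    exact and_iff_left ⟨he, hf⟩

theorem dualVerPart1_eq : dualVerPart1 α k a = (Ver (Finset.univ.erase a) k).dual := by
  ext e f
  · simp [dualVerPart1, IncStr.dual, Ver, forall_mem_ne_iff, and_comm]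
  · simp [dualVerPart1, IncStr.dual, Ver, forall_mem_ne_iff, and_comm]
  · simp only [dualVerPart1, IncStr.dual, Ver, Finset.mem_univ, Finset.mem_erase, ne_eq,
      and_true, implies_true, true_and, forall_mem_ne_iff]
    constructor
    · rintro ⟨⟨hf, he, x, rfl⟩, ⟨-, hae⟩, -, haf⟩
      refine ⟨haf, hf, hae, he, x, ?_, rfl⟩
      rintro rfl
      exact haf (mem_add.2 (Or.inr (mem_replicate.2 ⟨by omega, rfl⟩)))
    · rintro ⟨haf, hf, hae, he, x, -, hfe⟩
      exact ⟨⟨hf, he, x, hfe⟩, ⟨he, hae⟩, hf, haf⟩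

end SplitAtPoint

theorem statement17_general {α : Type*} [Fintype α] [DecidableEq α] (k : ℕ)
    (hk : 2 ≤ k) (a : α) :
    (Ver (Finset.univ : Finset α) k).dual =
      IncStr.join (dualVerPart2 α k a) (dualVerPart1 α k a)
        (fun f => Multiset.filter (· ≠ a) f) ∧
    IncStr.Isomorphic (dualVerPart2 α k a)
      (Ver (Finset.univ : Finset α) (k - 1)).dual ∧
    IncStr.Isomorphic (dualVerPart1 α k a)
      (Ver (Finset.univ.erase a) k).dual ∧
    IncStr.Isomorphic (Ver (Finset.univ : Finset α) k).dual
      (IncStr.join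
        (IncStr.tag (Ver (Finset.univ : Finset α) (k - 1)).dual false)
        (IncStr.tag (Ver (Finset.univ.erase a) k).dual true)
        (fun h => (Multiset.filter (· ≠ a) h.1, true))) := by
  have iso₂ := isIso_dualVerPart2 k a (by omega)
  have iso₁ : IncStr.IsIso (dualVerPart1 α k a) (Ver (Finset.univ.erase a) k).dual id id := by
    rw [dualVerPart1_eq]
    exact IncStr.isIso_id _
  refine ⟨dual_ver_univ_eq_join k a, ⟨_, _, iso₂⟩, ⟨_, _, iso₁⟩, ?_⟩
  rw [dual_ver_univ_eq_join k a]
  exact (iso₂.trans (IncStr.isIso_tag _ false)).join (iso₁.trans (IncStr.isIso_tag _ true))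
    (dualVerPart2_proper k a) (dualVerPart1_proper k a)
    (IncStr.proper_tag (Ver.proper _ _).dual false) (IncStr.proper_tag (Ver.proper _ _).dual true)
    (disjoint_dualVerPart_pts k a) (disjoint_dualVerPart_lns k a)
    (IncStr.disjoint_tag_pts _ _ Bool.false_ne_true)
    (IncStr.disjoint_tag_lns _ _ Bool.false_ne_true)
    (mapsTo_filter_ne_dualVerPart k a) fun f _ => by simp [Multiset.filter_ne_erase]

/-- for `|X| = m ≥ 3`, `k ≥ 2` and `a ∈ X`, the dual Veronesian
`V(X,k)°` equals `⟨L₂, X₂, I⁻¹⟩ ⋊_∞ ⟨L₁, X₁, I⁻¹⟩`, where `∞(f) = f / a^{dg(a,f)}`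
removes all copies of `a` from `f`; moreover `⟨L₂, X₂, I⁻¹⟩ ≅ V(X, k-1)°` and
`⟨L₁, X₁, I⁻¹⟩ ≅ V(X∖{a}, k)°`, so `V(X,k)° ≅ V(X,k-1)° ⋊ V(X∖{a},k)°`
(with formally disjoint tagged copies in the last join). -/
theorem statement17 {α : Type*} [Fintype α] [DecidableEq α] (m k : ℕ)
    (hm : 3 ≤ m) (hk : 2 ≤ k) (hcard : Fintype.card α = m) (a : α) :
    (Ver (Finset.univ : Finset α) k).dual =
      IncStr.join (dualVerPart2 α k a) (dualVerPart1 α k a)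
        (fun f => Multiset.filter (· ≠ a) f) ∧
    IncStr.Isomorphic (dualVerPart2 α k a)
      (Ver (Finset.univ : Finset α) (k - 1)).dual ∧
    IncStr.Isomorphic (dualVerPart1 α k a)
      (Ver (Finset.univ.erase a) k).dual ∧
    IncStr.Isomorphic (Ver (Finset.univ : Finset α) k).dual
      (IncStr.join
        (IncStr.tag (Ver (Finset.univ : Finset α) (k - 1)).dual false)
        (IncStr.tag (Ver (Finset.univ.erase a) k).dual true)
        (fun h => (Multiset.filter (· ≠ a) h.1, true))) :=
  statement17_general k hk a
end
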